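/- arXiv:math/9404237 — 8 statements merged into one kernel-verified Lean document; each statement's English description precedes it below -/
import Mathlib

section
/- Let f : ℂ → ℂ be an entire function, let p ∈ ℂ satisfy f(p) = p, and set λ = f′(p); assume 0 < |λ| < 1. Let A = {z ∈ ℂ : f^[n](z) → p as n → ∞} be the basin of attraction of p. Then there exists a function Φ : ℂ → ℂ that is complex-differentiable at every point of A, satisfies Φ(p) = 0 and Φ′(p) = 1, and satisfies the linearization equation Φ(f(z)) = λ·Φ(z) for every z ∈ A. -/
/-!
Let `λ = f'(p)` and `φₙ(z) = (fⁿ(z) - p) / λⁿ`. Near `p`, `f(w) - p = λ (w - p) + O(|w - p|²)`, so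
on a small disk the iterates contract at a rate `b` with `|λ| < b` and `b² < |λ|`, and
`|φₙ₊₁ - φₙ| = O((b² / |λ|)ⁿ)` uniformly there. Hence `φₙ` converges uniformly on the disk to a
holomorphic `Φ` with `Φ(p) = 0` and, as every `φₙ` has derivative `1` at `p`, `Φ'(p) = 1`.
The identity `φₘ(fᴺ z) = λᴺ φₘ₊ᴺ(z)` propagates the convergence to every point of the basin,
gives `Φ ∘ f = λ Φ`, and shows `Φ = λ⁻ᴺ Φ ∘ fᴺ` near any point whose `N`-th iterate lies in the
disk, so `Φ` is holomorphic on the basin.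
-/

open Filter Topology Metric Asymptotics

theorem tendstoUniformlyOn_of_norm_sub_le_summable {α E : Type*} [NormedAddCommGroup E]
    [CompleteSpace E] {F : ℕ → α → E} {u : ℕ → ℝ} {s : Set α} (hu : Summable u)
    (hF : ∀ n, ∀ x ∈ s, ‖F (n + 1) x - F n x‖ ≤ u n) :
    TendstoUniformlyOn F (fun x => F 0 x + ∑' n, (F (n + 1) x - F n x)) atTop s := by
  have hsum := tendstoUniformlyOn_tsum_nat hu hF
  rw [Metric.tendstoUniformlyOn_iff] at hsum ⊢
  intro ε hε
  filter_upwards [hsum ε hε] with N hN x hx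
  simpa [Finset.sum_range_sub (fun n => F n x), dist_add_left, add_comm] using hN x hx

theorem iterate_mem_ball_and_dist_le_pow_mul {X : Type*} [PseudoMetricSpace X] {f : X → X}
    {p x : X} {r b : ℝ} (hb0 : 0 ≤ b) (hb1 : b ≤ 1)
    (hf : ∀ y ∈ ball p r, dist (f y) p ≤ b * dist y p) (hx : x ∈ ball p r) (n : ℕ) : f^[n] x ∈ ball p r ∧ dist (f^[n] x) p ≤ b ^ n * dist x p := by
  induction n with
  | zero => simpa using hx
  | succ n ih =>
    have hstep : dist (f^[n + 1] x) p ≤ b ^ (n + 1) * dist x p := by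
      rw [Function.iterate_succ_apply', pow_succ']
      exact (hf _ ih.1).trans (by rw [mul_assoc]; gcongr; exact ih.2)
    refine ⟨?_, hstep⟩
    have : b ^ (n + 1) * dist x p ≤ dist x p :=
      mul_le_of_le_one_left dist_nonneg (pow_le_one₀ hb0 hb1)
    exact mem_ball.2 (hstep.trans_lt (this.trans_lt (mem_ball.1 hx)))

theorem sub_sub_deriv_mul_eq_sq_mul_dslope (f : ℂ → ℂ) (p z : ℂ) :
    f z - f p - deriv f p * (z - p) = (z - p) ^ 2 * dslope (dslope f p) p z := by
  have h1 := sub_smul_dslope f p z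
  have h2 := sub_smul_dslope (dslope f p) p z
  rw [smul_eq_mul] at h1 h2
  rw [dslope_same] at h2
  linear_combination -h1 - (z - p) * h2

theorem isBigO_sub_sub_deriv_mul {f : ℂ → ℂ} {s : Set ℂ} {p : ℂ} (hf : DifferentiableOn ℂ f s)
    (hs : s ∈ 𝓝 p) :
    (fun z => f z - f p - deriv f p * (z - p)) =O[𝓝 p] fun z => (z - p) ^ 2 := by
  have hg : ContinuousAt (dslope (dslope f p) p) p :=
    (((Complex.differentiableOn_dslope hs).2 ((Complex.differentiableOn_dslope hs).2 hf)
      ).differentiableAt hs).continuousAt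
  simpa [sub_sub_deriv_mul_eq_sq_mul_dslope] using
    (isBigO_refl (fun z => (z - p) ^ 2) (𝓝 p)).mul (hg.tendsto.isBigO_one ℂ)

theorem exists_ball_norm_sub_le_of_norm_deriv_lt {f : ℂ → ℂ} {s : Set ℂ} {p : ℂ} {b : ℝ}
    (hf : DifferentiableOn ℂ f s) (hs : s ∈ 𝓝 p) (hp : f p = p) (hb : ‖deriv f p‖ < b) :
    ∃ r > 0, ∃ C > 0, ∀ z ∈ ball p r,
      ‖f z - p - deriv f p * (z - p)‖ ≤ C * ‖z - p‖ ^ 2 ∧ ‖f z - p‖ ≤ b * ‖z - p‖ := by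
  obtain ⟨C, hC, hCO⟩ := (isBigO_sub_sub_deriv_mul hf hs).exists_pos
  obtain ⟨ε, hε, hball⟩ := Metric.eventually_nhds_iff_ball.1 hCO.bound
  refine ⟨min ε ((b - ‖deriv f p‖) / C), lt_min hε (div_pos (by linarith) hC), C, hC,
    fun z hz => ?_⟩
  have hzr := mem_ball_iff_norm.1 hz
  have hquad : ‖f z - p - deriv f p * (z - p)‖ ≤ C * ‖z - p‖ ^ 2 := by
    simpa [hp] using hball z (ball_subset_ball (min_le_left _ _) hz)
  refine ⟨hquad, ?_⟩
  have hCz : C * ‖z - p‖ ≤ b - ‖deriv f p‖ :=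
    (le_div_iff₀' hC).1 (hzr.le.trans (min_le_right _ _))
  calc ‖f z - p‖ ≤ ‖deriv f p * (z - p)‖ + ‖f z - p - deriv f p * (z - p)‖ :=
        norm_le_insert' _ _
    _ ≤ ‖deriv f p‖ * ‖z - p‖ + C * ‖z - p‖ * ‖z - p‖ := by
        rw [norm_mul, mul_assoc, ← sq]; gcongr
    _ ≤ b * ‖z - p‖ := by nlinarith [norm_nonneg (z - p)]

namespace Koenigs

variable (f : ℂ → ℂ) (p : ℂ)

noncomputable def approx (n : ℕ) (z : ℂ) : ℂ := (f^[n] z - p) / deriv f p ^ n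

/-- Off the basin the limit need not exist, and `map` takes a junk value there. -/
noncomputable def map (z : ℂ) : ℂ := limUnder atTop fun n => approx f p n z

variable {f p}

theorem approx_succ_sub (h0 : deriv f p ≠ 0) (n : ℕ) (z : ℂ) :
    approx f p (n + 1) z - approx f p n z =
      (f (f^[n] z) - p - deriv f p * (f^[n] z - p)) / deriv f p ^ (n + 1) := by
  simp only [approx, Function.iterate_succ_apply']
  field_simp
  ring

theorem approx_iterate (h0 : deriv f p ≠ 0) (N m : ℕ) (z : ℂ) :
    approx f p m (f^[N] z) = deriv f p ^ N * approx f p (m + N) z := by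
  simp only [approx, ← Function.iterate_add_apply]
  field_simp
  ring

theorem tendsto_approx_iterate_iff (h0 : deriv f p ≠ 0) {N : ℕ} {z w : ℂ} :
    Tendsto (fun m => approx f p m (f^[N] z)) atTop (𝓝 (deriv f p ^ N * w)) ↔
      Tendsto (fun m => approx f p m z) atTop (𝓝 w) := by
  have hN : deriv f p ^ N ≠ 0 := pow_ne_zero N h0
  simp only [approx_iterate h0]
  rw [← tendsto_add_atTop_iff_nat N (f := fun m => approx f p m z)]
  refine ⟨fun h => ?_, fun h => h.const_mul _⟩
  simpa [← mul_assoc, inv_mul_cancel₀ hN] using h.const_mul (deriv f p ^ N)⁻¹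

theorem map_iterate (h0 : deriv f p ≠ 0) {N : ℕ} {z : ℂ}
    (h : Tendsto (fun m => approx f p m (f^[N] z)) atTop (𝓝 (map f p (f^[N] z)))) :
    Tendsto (fun m => approx f p m z) atTop (𝓝 (map f p z)) ∧
      map f p (f^[N] z) = deriv f p ^ N * map f p z := by
  have hN : deriv f p ^ N ≠ 0 := pow_ne_zero N h0
  have hz : Tendsto (fun m => approx f p m z) atTop
      (𝓝 (map f p (f^[N] z) / deriv f p ^ N)) :=
    (tendsto_approx_iterate_iff h0).1 (by rwa [mul_div_cancel₀ _ hN])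
  have hmap : map f p z = map f p (f^[N] z) / deriv f p ^ N := hz.limUnder_eq
  rw [hmap]
  exact ⟨hz, (mul_div_cancel₀ _ hN).symm⟩

theorem map_self (hp : f p = p) : map f p p = 0 := by
  have : ∀ n, approx f p n p = 0 := fun n => by simp [approx, Function.iterate_fixed hp]
  simp only [map, this]
  exact tendsto_const_nhds.limUnder_eq

theorem differentiable_approx (hf : Differentiable ℂ f) (n : ℕ) :
    Differentiable ℂ (approx f p n) :=
  ((hf.iterate n).sub_const p).div_const _

theorem hasDerivAt_approx (hf : DifferentiableAt ℂ f p) (hp : f p = p) (h0 : deriv f p ≠ 0)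
    (n : ℕ) : HasDerivAt (approx f p n) 1 p := by
  have hiter : HasDerivAt f^[n] (deriv f p ^ n) p := by
    simpa using HasDerivAt.iterate p hf.hasDerivAt hp n
  have h := (hiter.sub_const p).div_const (deriv f p ^ n)
  rwa [div_self (pow_ne_zero n h0)] at h

theorem exists_tendstoUniformlyOn_approx (hf : Differentiable ℂ f) (hp : f p = p)
    (h0 : deriv f p ≠ 0) (h1 : ‖deriv f p‖ < 1) :
    ∃ r > 0, TendstoUniformlyOn (approx f p) (map f p) atTop (ball p r) := by
  set a := ‖deriv f p‖ with ha_def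
  have ha : 0 < a := norm_pos_iff.2 h0
  -- any `b` with `a < b < √a` contracts near `p` while `b ^ 2 / a < 1` makes the series converge
  obtain ⟨b, hab, hb⟩ : ∃ b, a < b ∧ b < √a :=
    exists_between ((Real.lt_sqrt ha.le).2 (by nlinarith))
  have hb0 : 0 ≤ b := ha.le.trans hab.le
  have hb2 : b ^ 2 < a := (Real.lt_sqrt hb0).1 hb
  have hb1 : b ≤ 1 := (hb.trans ((Real.sqrt_lt' one_pos).2 (by simpa using h1))).le
  obtain ⟨r, hr, C, hC, hball⟩ :=
    exists_ball_norm_sub_le_of_norm_deriv_lt hf.differentiableOn univ_mem hp hab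
  have hiter : ∀ z ∈ ball p r, ∀ n, f^[n] z ∈ ball p r ∧ ‖f^[n] z - p‖ ≤ b ^ n * r := by
    intro z hz n
    have h := iterate_mem_ball_and_dist_le_pow_mul hb0 hb1
      (fun y hy => by simpa only [dist_eq_norm] using (hball y hy).2) hz n
    rw [dist_eq_norm] at h
    exact ⟨h.1, h.2.trans (by gcongr; exact (mem_ball.1 hz).le)⟩
  set u : ℕ → ℝ := fun n => C * r ^ 2 / a * (b ^ 2 / a) ^ n
  have hu : Summable u :=
    (summable_geometric_of_lt_one (by positivity) ((div_lt_one ha).2 hb2)).mul_left _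
  have hbound : ∀ n, ∀ z ∈ ball p r, ‖approx f p (n + 1) z - approx f p n z‖ ≤ u n := by
    intro n z hz
    obtain ⟨hmem, hnorm⟩ := hiter z hz n
    rw [approx_succ_sub h0, norm_div, norm_pow, ← ha_def, div_le_iff₀ (by positivity)]
    calc _ ≤ C * ‖f^[n] z - p‖ ^ 2 := (hball _ hmem).1
      _ ≤ C * (b ^ n * r) ^ 2 := by gcongr
      _ = u n * a ^ (n + 1) := by simp only [u]; rw [div_pow, pow_succ]; field_simp; ring
  refine ⟨r, hr, (tendstoUniformlyOn_of_norm_sub_le_summable hu hbound).congr_right ?_⟩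
  intro z hz
  exact ((tendstoUniformlyOn_of_norm_sub_le_summable hu hbound).tendsto_at hz).limUnder_eq.symm

variable {r : ℝ}

theorem differentiableAt_map (hf : Differentiable ℂ f) (h0 : deriv f p ≠ 0)
    (hr : TendstoUniformlyOn (approx f p) (map f p) atTop (ball p r)) {N : ℕ} {z : ℂ}
    (hz : f^[N] z ∈ ball p r) : DifferentiableAt ℂ (map f p) z := by
  have hdiff : DifferentiableOn ℂ (map f p) (ball p r) :=
    hr.tendstoLocallyUniformlyOn.differentiableOn
      (Eventually.of_forall fun n => (differentiable_approx hf n).differentiableOn) isOpen_ball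
  have hU : f^[N] ⁻¹' ball p r ∈ 𝓝 z :=
    (isOpen_ball.preimage (hf.iterate N).continuous).mem_nhds hz
  have heq : (fun w => map f p (f^[N] w) / deriv f p ^ N) =ᶠ[𝓝 z] map f p := by
    filter_upwards [hU] with w hw
    rw [(map_iterate h0 (hr.tendsto_at hw)).2, mul_div_cancel_left₀ _ (pow_ne_zero N h0)]
  exact (((hdiff.differentiableAt (isOpen_ball.mem_nhds hz)).comp z
    ((hf.iterate N) z)).div_const _).congr_of_eventuallyEq heq.symm

theorem deriv_map_self (hf : Differentiable ℂ f) (hp : f p = p) (h0 : deriv f p ≠ 0)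
    (hr0 : 0 < r) (hr : TendstoUniformlyOn (approx f p) (map f p) atTop (ball p r)) :
    deriv (map f p) p = 1 := by
  have h := (hr.tendstoLocallyUniformlyOn.deriv
    (Eventually.of_forall fun n => (differentiable_approx hf n).differentiableOn)
    isOpen_ball).tendsto_at (mem_ball_self hr0)
  simp only [Function.comp_def, (hasDerivAt_approx (hf p) hp h0 _).deriv] at h
  exact tendsto_nhds_unique tendsto_const_nhds h |>.symm

end Koenigs

/-- Koenigs linearization on the whole basin of attraction of an attracting
fixed point with nonzero multiplier, for an entire map. -/
theorem stmt2 (f : ℂ → ℂ) (hf : Differentiable ℂ f)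
    (p : ℂ) (hp : f p = p)
    (hl0 : 0 < ‖deriv f p‖) (hl1 : ‖deriv f p‖ < 1)
    (A : Set ℂ) (hA : A = {z : ℂ | Tendsto (fun n => f^[n] z) atTop (𝓝 p)}) :
    ∃ Φ : ℂ → ℂ, (∀ z ∈ A, DifferentiableAt ℂ Φ z) ∧ Φ p = 0 ∧ deriv Φ p = 1 ∧
      ∀ z ∈ A, Φ (f z) = deriv f p * Φ z := by
  subst hA
  have h0 : deriv f p ≠ 0 := norm_pos_iff.1 hl0
  obtain ⟨r, hr0, hr⟩ := Koenigs.exists_tendstoUniformlyOn_approx hf hp h0 hl1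
  have hentry : ∀ z, Tendsto (fun n => f^[n] z) atTop (𝓝 p) → ∃ N, f^[N] z ∈ ball p r :=
    fun z hz => (hz.eventually (ball_mem_nhds p hr0)).exists
  refine ⟨Koenigs.map f p, fun z hz => ?_, Koenigs.map_self hp,
    Koenigs.deriv_map_self hf hp h0 hr0 hr, fun z hz => ?_⟩
  · obtain ⟨N, hN⟩ := hentry z hz
    exact Koenigs.differentiableAt_map hf h0 hr hN
  · have hfz : Tendsto (fun n => f^[n] (f z)) atTop (𝓝 p) := by
      simpa only [Function.iterate_succ_apply] using (tendsto_add_atTop_iff_nat 1).2 hz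
    obtain ⟨N, hN⟩ := hentry (f z) hfz
    have hconv := (Koenigs.map_iterate h0 (hr.tendsto_at hN)).1
    simpa using (Koenigs.map_iterate h0 (N := 1) hconv).2
end

section
/- Let P be a polynomial over ℂ of degree d ≥ 2 and let z ∈ ℂ be a point whose orbit escapes, i.e. ‖P^[n](z)‖ → ∞ as n → ∞. Then the sequence n ↦ d^{−n}·log‖P^[n](z)‖ converges to a finite real limit G(z); moreover, the corresponding limit at the point P(z) equals d·G(z), i.e. d^{−n}·log‖P^[n](P(z))‖ → d·G(z). -/
open Filter Topology Finset

lemma key_est (P : Polynomial ℂ) (hd : 2 ≤ P.natDegree) :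
    ∃ C R : ℝ, 1 ≤ R ∧ ∀ w : ℂ, R ≤ ‖w‖ →
      |Real.log ‖P.eval w‖ - (P.natDegree : ℝ) * Real.log ‖w‖| ≤ C := by
  set d := P.natDegree with hdd
  have hP0 : P ≠ 0 := by
    intro h; rw [h, Polynomial.natDegree_zero] at hdd; omega
  set c := P.leadingCoeff with hcc
  have hc : 0 < ‖c‖ :=
    norm_pos_iff.mpr (Polynomial.leadingCoeff_ne_zero.mpr hP0)
  set S : ℝ := ∑ i ∈ Finset.range d, ‖P.coeff i‖ with hS
  have hS0 : 0 ≤ S := Finset.sum_nonneg fun i _ => norm_nonneg _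
  have hq : 0 ≤ 2 * S / ‖c‖ := div_nonneg (by linarith) hc.le
  refine ⟨|Real.log (‖c‖/2)| + |Real.log (‖c‖ + S)|, 1 + 2 * S / ‖c‖, by linarith, ?_⟩
  intro w hw
  have hw1 : (1:ℝ) ≤ ‖w‖ := le_trans (by linarith) hw
  have hw0 : (0:ℝ) < ‖w‖ := lt_of_lt_of_le one_pos hw1
  have hwS : 2 * S / ‖c‖ ≤ ‖w‖ := le_trans (by linarith) hw
  -- decomposition
  have hdec : ‖P.eval w - c * w ^ d‖ ≤ S * ‖w‖ ^ (d - 1) := by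
    have heval : P.eval w = ∑ i ∈ Finset.range (d + 1), P.coeff i * w ^ i := by
      rw [Polynomial.eval_eq_sum_range]
    have hsplit : P.eval w - c * w ^ d = ∑ i ∈ Finset.range d, P.coeff i * w ^ i := by
      rw [heval, Finset.sum_range_succ, Polynomial.coeff_natDegree]
      ring
    rw [hsplit]
    calc ‖∑ i ∈ Finset.range d, P.coeff i * w ^ i‖
        ≤ ∑ i ∈ Finset.range d, ‖P.coeff i * w ^ i‖ := norm_sum_le _ _
      _ ≤ ∑ i ∈ Finset.range d, ‖P.coeff i‖ * ‖w‖ ^ (d - 1) := by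
          refine Finset.sum_le_sum fun i hi => ?_
          have hi' := Finset.mem_range.mp hi
          rw [norm_mul, norm_pow]
          exact mul_le_mul_of_nonneg_left
            (pow_le_pow_right₀ hw1 (by omega : i ≤ d - 1)) (norm_nonneg _)
      _ = S * ‖w‖ ^ (d - 1) := by rw [← Finset.sum_mul]
  have hpow : ‖w‖ ^ d = ‖w‖ ^ (d - 1) * ‖w‖ := by
    rw [← pow_succ]
    congr 1
    omega
  have hSw : S * ‖w‖ ^ (d - 1) ≤ ‖c‖ / 2 * ‖w‖ ^ d := by
    have h1 : S ≤ ‖c‖ / 2 * ‖w‖ := by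
      rw [div_le_iff₀ hc] at hwS
      linarith
    calc S * ‖w‖ ^ (d-1) ≤ (‖c‖/2 * ‖w‖) * ‖w‖ ^ (d-1) :=
          mul_le_mul_of_nonneg_right h1 (by positivity)
      _ = ‖c‖/2 * ‖w‖ ^ d := by rw [hpow]; ring
  have hlo : ‖c‖ / 2 * ‖w‖ ^ d ≤ ‖P.eval w‖ := by
    have := norm_sub_norm_le (c * w ^ d) (c * w ^ d - P.eval w)
    have h2 : ‖c * w ^ d - P.eval w‖ = ‖P.eval w - c * w ^ d‖ := norm_sub_rev _ _
    have h3 : ‖c * w ^ d‖ = ‖c‖ * ‖w‖ ^ d := by rw [norm_mul, norm_pow]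
    have h4 : c * w ^ d - (c * w ^ d - P.eval w) = P.eval w := by ring
    rw [h4, h2, h3] at this
    linarith
  have hhi : ‖P.eval w‖ ≤ (‖c‖ + S) * ‖w‖ ^ d := by
    have h5 : ‖P.eval w‖ ≤ ‖c * w ^ d‖ + ‖P.eval w - c * w ^ d‖ := by
      have := norm_add_le (c * w ^ d) (P.eval w - c * w ^ d)
      simpa using this
    have h3 : ‖c * w ^ d‖ = ‖c‖ * ‖w‖ ^ d := by rw [norm_mul, norm_pow]
    have h6 : S * ‖w‖ ^ (d - 1) ≤ S * ‖w‖ ^ d := by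
      apply mul_le_mul_of_nonneg_left _ hS0
      exact pow_le_pow_right₀ hw1 (by omega)
    nlinarith
  -- positivity
  have hwd : (0:ℝ) < ‖w‖ ^ d := by positivity
  have hPw : (0:ℝ) < ‖P.eval w‖ := lt_of_lt_of_le (by positivity) hlo
  have hlogpow : Real.log (‖w‖ ^ d) = (d : ℝ) * Real.log ‖w‖ := by
    rw [Real.log_pow]
  have hloglo : Real.log (‖c‖/2) + (d:ℝ) * Real.log ‖w‖ ≤ Real.log ‖P.eval w‖ := by
    have := Real.log_le_log (mul_pos (half_pos hc) hwd) hlo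
    rwa [Real.log_mul (ne_of_gt (half_pos hc)) (ne_of_gt hwd), hlogpow] at this
  have hloghi : Real.log ‖P.eval w‖ ≤ Real.log (‖c‖ + S) + (d:ℝ) * Real.log ‖w‖ := by
    have := Real.log_le_log hPw hhi
    rwa [Real.log_mul (ne_of_gt (by linarith : (0:ℝ) < ‖c‖ + S)) (ne_of_gt hwd), hlogpow] at this
  rw [abs_le]
  constructor
  · have := neg_abs_le (Real.log (‖c‖/2))
    have h7 := abs_nonneg (Real.log (‖c‖ + S))
    linarith
  · have := le_abs_self (Real.log (‖c‖ + S))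
    have h7 := abs_nonneg (Real.log (‖c‖/2))
    linarith

/-- Green's function of the basin of infinity of a polynomial: for an escaping
point z, the limit G(z) = lim d^{−n} log‖P^[n](z)‖ exists, and the corresponding
limit at P(z) equals d·G(z). -/
theorem stmt3 (P : Polynomial ℂ) (hd : 2 ≤ P.natDegree) (z : ℂ)
    (hz : Tendsto (fun n => ‖(fun w => P.eval w)^[n] z‖) atTop atTop) :
    ∃ G : ℝ,
      Tendsto (fun n => ((P.natDegree : ℝ) ^ n)⁻¹ *
        Real.log ‖(fun w => P.eval w)^[n] z‖) atTop (𝓝 G) ∧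
      Tendsto (fun n => ((P.natDegree : ℝ) ^ n)⁻¹ *
        Real.log ‖(fun w => P.eval w)^[n] (P.eval z)‖) atTop
        (𝓝 ((P.natDegree : ℝ) * G)) := by
  obtain ⟨C, R, hR1, hCR⟩ := key_est P hd
  have hd2 : (2:ℝ) ≤ (P.natDegree : ℝ) := by exact_mod_cast hd
  have hd0 : (0:ℝ) < (P.natDegree : ℝ) := by linarith
  have hdne : (P.natDegree : ℝ) ≠ 0 := ne_of_gt hd0
  set a : ℕ → ℝ := fun n => ((P.natDegree : ℝ) ^ n)⁻¹ *
    Real.log ‖(fun w => P.eval w)^[n] z‖ with ha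
  obtain ⟨N, hN⟩ := eventually_atTop.mp (hz.eventually_ge_atTop R)
  have hC0 : 0 ≤ C := le_trans (abs_nonneg _) (hCR _ (hN N le_rfl))
  have hinv : ∀ n : ℕ, ((P.natDegree:ℝ)^n)⁻¹
      = (P.natDegree:ℝ) * ((P.natDegree:ℝ)^(n+1))⁻¹ := by
    intro n
    rw [pow_succ, mul_inv]
    field_simp
  have hkey : ∀ n, N ≤ n → |a (n+1) - a n| ≤ C * ((P.natDegree:ℝ)^(n+1))⁻¹ := by
    intro n hn
    have hwR := hN n hn
    have hstep : (fun w => P.eval w)^[n+1] z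
        = P.eval ((fun w => P.eval w)^[n] z) := Function.iterate_succ_apply' _ _ _
    have hest := hCR _ hwR
    have hdiff : a (n+1) - a n = ((P.natDegree:ℝ)^(n+1))⁻¹ *
        (Real.log ‖P.eval ((fun w => P.eval w)^[n] z)‖ -
          (P.natDegree:ℝ) * Real.log ‖(fun w => P.eval w)^[n] z‖) := by
      simp only [ha, hstep, hinv n]
      ring
    rw [hdiff, abs_mul, abs_of_nonneg (by positivity : (0:ℝ) ≤ ((P.natDegree:ℝ)^(n+1))⁻¹)]
    calc ((P.natDegree:ℝ)^(n+1))⁻¹ * |_| ≤ ((P.natDegree:ℝ)^(n+1))⁻¹ * C :=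
          mul_le_mul_of_nonneg_left hest (by positivity)
      _ = C * ((P.natDegree:ℝ)^(n+1))⁻¹ := mul_comm _ _
  -- Cauchy sequence via geometric bound
  set b : ℕ → ℝ := fun n => a (N + n) with hb
  have hcauchy : CauchySeq b := by
    apply cauchySeq_of_le_geometric ((P.natDegree:ℝ))⁻¹ (C * ((P.natDegree:ℝ)^(N+1))⁻¹)
      (by rw [inv_lt_one_iff₀]; right; linarith)
    intro n
    have h1 : dist (b n) (b (n+1)) = |a (N+n+1) - a (N+n)| := by
      rw [Real.dist_eq, abs_sub_comm]
      simp only [hb]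
      norm_num [← add_assoc]
    rw [h1]
    calc |a (N+n+1) - a (N+n)| ≤ C * ((P.natDegree:ℝ)^(N+n+1))⁻¹ :=
          hkey (N+n) (by omega)
      _ = C * ((P.natDegree:ℝ)^(N+1))⁻¹ * ((P.natDegree:ℝ)⁻¹)^n := by
          rw [show N+n+1 = (N+1)+n by omega, pow_add, mul_inv, inv_pow]
          ring
  obtain ⟨G, hG⟩ := cauchySeq_tendsto_of_complete hcauchy
  have hGa : Tendsto a atTop (𝓝 G) := by
    rw [← tendsto_add_atTop_iff_nat N]
    convert hG using 2 with n
    simp [hb, add_comm]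
  refine ⟨G, hGa, ?_⟩
  have hGa1 : Tendsto (fun n => a (n+1)) atTop (𝓝 G) :=
    (tendsto_add_atTop_iff_nat 1).mpr hGa
  have := hGa1.const_mul (P.natDegree : ℝ)
  convert this using 2 with n
  have hstep : (fun w => P.eval w)^[n] (P.eval z)
      = (fun w => P.eval w)^[n+1] z := (Function.iterate_succ_apply _ _ _).symm
  simp only [ha, hstep, hinv n]
  ring
end

section
/- Let c ∈ ℂ, let N be a natural number, and let a : Fin N → ℂ and b : Fin N → ℂ. Define f : ℂ → ℂ by f(z) = z² + c + Σ_{m} b_m/(z − a_m), where division by zero is interpreted as 0, so that f is a total function on ℂ. Suppose z ∈ ℂ satisfies ‖f^[n](z)‖ → ∞ as n → ∞. Then the sequence n ↦ 2^{−n}·log‖f^[n](z)‖ converges to a finite real limit Ĝ(z), and the corresponding limit at the point f(z) equals 2·Ĝ(z), i.e. 2^{−n}·log‖f^[n](f(z))‖ → 2·Ĝ(z). -/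
open Filter Topology

/-! Outside a large disc, `f w = w² + O(1)`, so along an escaping orbit the numbers
`Lₙ = log ‖f^[n] z‖` satisfy `|Lₙ₊₁ - 2 Lₙ| ≤ log 2` eventually. Consecutive terms of
`2⁻ⁿ Lₙ` then differ by at most `2⁻ⁿ⁻¹ log 2`, a summable bound, so the sequence is Cauchy;
the value at `f z` is the same sequence shifted by one step, which rescales the limit by `2`. -/

section Rescaling

variable {d C : ℝ} {L : ℕ → ℝ}

lemma dist_inv_pow_mul_succ_le (hd : 1 < d) {n : ℕ} (hn : |L (n + 1) - d * L n| ≤ C) :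
    dist ((d ^ n)⁻¹ * L n) ((d ^ (n + 1))⁻¹ * L (n + 1)) ≤ C * d⁻¹ ^ (n + 1) := by
  have hdn : 0 < d ^ (n + 1) := pow_pos (by linarith) _
  have hsplit : (d ^ n)⁻¹ * L n - (d ^ (n + 1))⁻¹ * L (n + 1)
      = -((d ^ (n + 1))⁻¹ * (L (n + 1) - d * L n)) := by
    field_simp
    ring
  rw [Real.dist_eq, hsplit, abs_neg, abs_mul, abs_of_pos (inv_pos.mpr hdn), inv_pow, mul_comm]
  exact mul_le_mul_of_nonneg_right hn (inv_pos.mpr hdn).le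

lemma exists_tendsto_inv_pow_mul (hd : 1 < d)
    (hL : ∀ᶠ n in atTop, |L (n + 1) - d * L n| ≤ C) :
    ∃ G, Tendsto (fun n => (d ^ n)⁻¹ * L n) atTop (𝓝 G) := by
  have hgeom : Summable fun n : ℕ => C * d⁻¹ ^ (n + 1) :=
    ((summable_nat_add_iff 1).mpr
      (summable_geometric_of_lt_one (by positivity) (inv_lt_one_of_one_lt₀ hd))).mul_left C
  have hsum : Summable fun n => dist ((d ^ n)⁻¹ * L n) ((d ^ (n + 1))⁻¹ * L (n + 1)) := by
    refine hgeom.of_norm_bounded_eventually ?_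
    rw [Nat.cofinite_eq_atTop]
    filter_upwards [hL] with n hn
    rw [Real.norm_of_nonneg dist_nonneg]
    exact dist_inv_pow_mul_succ_le hd hn
  exact cauchySeq_tendsto_of_complete (cauchySeq_of_summable_dist hsum)

lemma Filter.Tendsto.inv_pow_mul_succ (hd : d ≠ 0) {G : ℝ}
    (hG : Tendsto (fun n => (d ^ n)⁻¹ * L n) atTop (𝓝 G)) :
    Tendsto (fun n => (d ^ n)⁻¹ * L (n + 1)) atTop (𝓝 (d * G)) := by
  refine ((hG.comp (tendsto_add_atTop_nat 1)).const_mul d).congr fun n => ?_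
  simp only [Function.comp_apply, pow_succ]
  field_simp

end Rescaling

section Asymptotics

variable {𝕜 : Type*} [NormedField 𝕜]

lemma norm_sum_div_sub_le {ι : Type*} (s : Finset ι) (a b : ι → 𝕜) {w : 𝕜}
    (hw : 1 + ∑ m ∈ s, ‖a m‖ ≤ ‖w‖) :
    ‖∑ m ∈ s, b m / (w - a m)‖ ≤ ∑ m ∈ s, ‖b m‖ := by
  refine (norm_sum_le _ _).trans (Finset.sum_le_sum fun m hm => ?_)
  have ham : ‖a m‖ ≤ ∑ m ∈ s, ‖a m‖ :=
    Finset.single_le_sum (fun i _ => norm_nonneg (a i)) hm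
  have hdist : 1 ≤ ‖w - a m‖ := by linarith [norm_sub_norm_le w (a m)]
  rw [norm_div]
  exact div_le_self (norm_nonneg _) hdist

lemma abs_log_norm_sub_two_mul_log_norm_le {x y : 𝕜} {K : ℝ} (hx : x ≠ 0)
    (hK : 2 * K ≤ ‖x‖ ^ 2) (hy : ‖y - x ^ 2‖ ≤ K) :
    |Real.log ‖y‖ - 2 * Real.log ‖x‖| ≤ Real.log 2 := by
  have hx0 : 0 < ‖x‖ := norm_pos_iff.mpr hx
  have hlower : ‖x‖ ^ 2 / 2 ≤ ‖y‖ := by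
    linarith [norm_sub_norm_le (x ^ 2) y, norm_sub_rev y (x ^ 2), norm_pow x 2]
  have hupper : ‖y‖ ≤ 2 * ‖x‖ ^ 2 := by
    linarith [norm_sub_norm_le y (x ^ 2), norm_pow x 2]
  have hlog_lower := Real.log_le_log (by positivity) hlower
  have hlog_upper := Real.log_le_log (by linarith [pow_pos hx0 2]) hupper
  rw [Real.log_div (by positivity) two_ne_zero, Real.log_pow] at hlog_lower
  rw [Real.log_mul two_ne_zero (by positivity), Real.log_pow] at hlog_upper
  push_cast at hlog_lower hlog_upper
  rw [abs_le]
  constructor <;> linarith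

end Asymptotics

/-- Green's-type function for f(z) = z² + c + Σ b_m/(z − a_m): for an escaping
point z the limit Ĝ(z) = lim 2^{−n} log‖f^[n](z)‖ exists, and the corresponding
limit at f(z) equals 2·Ĝ(z). -/
theorem stmt4 (c : ℂ) (N : ℕ) (a b : Fin N → ℂ) (f : ℂ → ℂ)
    (hf : ∀ z : ℂ, f z = z ^ 2 + c + ∑ m : Fin N, b m / (z - a m))
    (z : ℂ) (hz : Tendsto (fun n => ‖f^[n] z‖) atTop atTop) :
    ∃ G : ℝ,
      Tendsto (fun n => ((2 : ℝ) ^ n)⁻¹ * Real.log ‖f^[n] z‖) atTop (𝓝 G) ∧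
      Tendsto (fun n => ((2 : ℝ) ^ n)⁻¹ * Real.log ‖f^[n] (f z)‖) atTop
        (𝓝 (2 * G)) := by
  have hstep : ∀ᶠ n in atTop,
      |Real.log ‖f^[n + 1] z‖ - 2 * Real.log ‖f^[n] z‖| ≤ Real.log 2 := by
    filter_upwards [hz.eventually_gt_atTop 0, hz.eventually_ge_atTop (1 + ∑ m, ‖a m‖),
      ((tendsto_pow_atTop two_ne_zero).comp hz).eventually_ge_atTop (2 * (‖c‖ + ∑ m, ‖b m‖))]
      with n hpos hfar hsq
    rw [Function.iterate_succ_apply']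
    refine abs_log_norm_sub_two_mul_log_norm_le (norm_pos_iff.mp hpos) hsq ?_
    rw [hf, add_assoc, add_sub_cancel_left]
    exact (norm_add_le _ _).trans (add_le_add_right (norm_sum_div_sub_le _ a b hfar) _)
  obtain ⟨G, hG⟩ := exists_tendsto_inv_pow_mul (L := fun n => Real.log ‖f^[n] z‖) one_lt_two hstep
  refine ⟨G, hG, ?_⟩
  simpa only [← Function.iterate_succ_apply] using hG.inv_pow_mul_succ two_ne_zero
end

section
/- Let P be a polynomial over ℂ of degree at least 2. Let K(P) = {z ∈ ℂ : the sequence n ↦ ‖P^[n](z)‖ is bounded} be the filled Julia set of P. If K(P) is not connected, then there exists z ∈ ℂ with P′(z) = 0 and z ∉ K(P), i.e. a critical point of P whose forward orbit is unbounded (hence lies in the basin of attraction to ∞). -/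
/-!
Suppose every critical point of `P` has bounded orbit. For an escape radius `R`, the
lemniscates `Sₙ = {z | ‖Pⁿ(z)‖ ≤ R}` are compact, decrease, and intersect in `K(P)`. By the
chain rule some forward image of a critical point of `Pⁿ` is critical for `P`, so every
critical point of `Pⁿ` lies in `K(P) ⊆ Sₙ`.

A lemniscate `{‖Q‖ ≤ r}` containing all critical points of `Q` is connected: two of its points
lie in one component of `{‖Q‖ ≤ s}` for large `s`, and the least such level is `r`. Indeed, at
a non-critical point `Q` is a local homeomorphism, so above `r` the set `{‖Q‖ ≤ s}` is locally
the closure of a connected piece of `{‖Q‖ < s}`, and two points joined at level `s` are joined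
by a path inside `{‖Q‖ < s}`, hence at a lower level. So `K(P)` is a decreasing intersection of
compact connected sets, hence connected.
-/

open Polynomial Set Metric Filter

section Connected

variable {X : Type*} [TopologicalSpace X]

theorem IsClosed.connectedComponentIn {F : Set X} (hF : IsClosed F) (x : X) :
    IsClosed (connectedComponentIn F x) := by
  by_cases hx : x ∈ F
  · refine isClosed_of_closure_subset ?_
    exact isPreconnected_connectedComponentIn.closure.subset_connectedComponentIn
      (subset_closure (mem_connectedComponentIn hx))
      (closure_minimal (connectedComponentIn_subset F x) hF)
  · rw [connectedComponentIn_eq_empty hx]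
    exact isClosed_empty

theorem isConnected_iInter_of_directed [T2Space X] {ι : Type*} [Nonempty ι] {V : ι → Set X}
    (hdir : Directed (· ⊇ ·) V) (hcpt : ∀ i, IsCompact (V i)) (hconn : ∀ i, IsConnected (V i)) :
    IsConnected (⋂ i, V i) := by
  have hclosed : IsClosed (⋂ i, V i) := isClosed_iInter fun i => (hcpt i).isClosed
  have hcompact : IsCompact (⋂ i, V i) :=
    (hcpt (Classical.arbitrary ι)).of_isClosed_subset hclosed (iInter_subset _ _)
  refine ⟨IsCompact.nonempty_iInter_of_directed_nonempty_isCompact_isClosed V hdir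
    (fun i => (hconn i).nonempty) hcpt fun i => (hcpt i).isClosed, ?_⟩
  rw [isPreconnected_iff_subset_of_fully_disjoint_closed hclosed]
  intro u v hu hv hcover huv
  obtain ⟨U, W, hU, hW, huU, hvW, hUW⟩ := SeparatedNhds.of_isCompact_isCompact
    (hcompact.inter_right hu) (hcompact.inter_right hv)
    (huv.mono inter_subset_right inter_subset_right)
  have hTUW : ⋂ i, V i ⊆ U ∪ W := fun x hx =>
    (hcover hx).imp (fun h => huU ⟨hx, h⟩) fun h => hvW ⟨hx, h⟩
  obtain ⟨i, hi⟩ := exists_subset_nhds_of_isCompact hdir hcpt fun x hx =>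
    (hU.union hW).mem_nhds (hTUW hx)
  rcases (hconn i).isPreconnected.subset_or_subset hU hW hUW hi with hVU | hVW
  · refine .inl fun x hx => (hcover hx).resolve_right fun hxv => ?_
    exact hUW.le_bot ⟨hVU (iInter_subset V i hx), hvW ⟨hx, hxv⟩⟩
  · refine .inr fun x hx => (hcover hx).resolve_left fun hxu => ?_
    exact hUW.le_bot ⟨huU ⟨hx, hxu⟩, hVW (iInter_subset V i hx)⟩

end Connected

section Sublevel

variable {X : Type*} [TopologicalSpace X] {f : X → ℝ}

/-- The local form of "`x` is not a critical point of `f` at level `s`" used below; for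
`f = ‖Q‖` with `Q` a polynomial it holds at every non-critical point of `Q` off the zero set. -/
def IsSublevelRegularAt (f : X → ℝ) (s : ℝ) (x : X) : Prop :=
  ∃ N : Set X, IsOpen N ∧ x ∈ N ∧ IsPreconnected (N ∩ {y | f y < s}) ∧
    N ∩ {y | f y ≤ s} ⊆ closure (N ∩ {y | f y < s})

theorem isSublevelRegularAt_of_lt [LocallyConnectedSpace X] (hf : Continuous f) {s : ℝ} {x : X}
    (hx : f x < s) : IsSublevelRegularAt f s x := by
  have hN : connectedComponentIn {y | f y < s} x ∩ {y | f y < s} =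
      connectedComponentIn {y | f y < s} x :=
    inter_eq_left.mpr (connectedComponentIn_subset _ _)
  refine ⟨_, (isOpen_lt hf continuous_const).connectedComponentIn, mem_connectedComponentIn hx,
    ?_, ?_⟩
  · rw [hN]
    exact isPreconnected_connectedComponentIn
  · rw [hN]
    exact inter_subset_left.trans subset_closure

theorem IsSublevelRegularAt.exists_nhds_subset {s : ℝ} {z a : X} (h : IsSublevelRegularAt f s z)
    (hz : z ∈ closure (connectedComponentIn {y | f y < s} a)) :
    ∃ N : Set X, IsOpen N ∧ z ∈ N ∧
      N ∩ {y | f y < s} ⊆ connectedComponentIn {y | f y < s} a ∧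
      N ∩ {y | f y ≤ s} ⊆ closure (connectedComponentIn {y | f y < s} a) := by
  obtain ⟨N, hN, hzN, hpre, hcl⟩ := h
  obtain ⟨g, hgN, hgG⟩ := mem_closure_iff.mp hz N hN hzN
  have hsub : N ∩ {y | f y < s} ⊆ connectedComponentIn {y | f y < s} a := by
    rw [connectedComponentIn_eq hgG]
    exact hpre.subset_connectedComponentIn ⟨hgN, connectedComponentIn_subset _ _ hgG⟩
      inter_subset_right
  exact ⟨N, hN, hzN, hsub, hcl.trans (closure_mono hsub)⟩

theorem connectedComponentIn_le_subset_closure_connectedComponentIn_lt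
    [LocallyConnectedSpace X] (hf : Continuous f) {s : ℝ}
    (hreg : ∀ x, f x = s → IsSublevelRegularAt f s x) {a : X} (ha : f a < s) :
    connectedComponentIn {y | f y ≤ s} a ⊆ closure (connectedComponentIn {y | f y < s} a) := by
  set T := connectedComponentIn {y | f y ≤ s} a
  have hT : IsPreconnected T := isPreconnected_connectedComponentIn
  have haT : a ∈ T := mem_connectedComponentIn (show f a ≤ s from ha.le)
  have hTs : T ⊆ {y | f y ≤ s} := connectedComponentIn_subset _ _
  set G := connectedComponentIn {y | f y < s} a
  set W := ⋃₀ {N : Set X | IsOpen N ∧ N ∩ {y | f y ≤ s} ⊆ closure G}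
  have hW : IsOpen W := isOpen_sUnion fun N hN => hN.1
  have hWG : W ∩ {y | f y ≤ s} ⊆ closure G := by
    rintro z ⟨⟨N, hN, hzN⟩, hz⟩
    exact hN.2 ⟨hzN, hz⟩
  have hGW : ∀ z ∈ closure G, f z ≤ s → z ∈ W := by
    intro z hzG hz
    have hzreg : IsSublevelRegularAt f s z :=
      hz.lt_or_eq.elim (isSublevelRegularAt_of_lt hf) (hreg z)
    obtain ⟨N, hN, hzN, -, hNG⟩ := hzreg.exists_nhds_subset hzG
    exact ⟨N, ⟨hN, hNG⟩, hzN⟩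
  intro b hbT
  by_contra hbG
  obtain ⟨z, hzT, hzW, hzG⟩ := hT W (closure G)ᶜ hW isClosed_closure.isOpen_compl
    (fun z hz => (em (z ∈ closure G)).imp (fun h => hGW z h (hTs hz)) id)
    ⟨a, haT, hGW a (subset_closure (mem_connectedComponentIn ha)) ha.le⟩ ⟨b, hbT, hbG⟩
  exact hzG (hWG ⟨hzW, hTs hzT⟩)

theorem exists_lt_mem_connectedComponentIn_le [LocallyPathConnectedSpace X] (hf : Continuous f)
    {s : ℝ} {a b : X} (hb : b ∈ connectedComponentIn {y | f y < s} a) :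
    ∃ t < s, b ∈ connectedComponentIn {y | f y ≤ t} a := by
  have ha : a ∈ {y | f y < s} := connectedComponentIn_nonempty_iff.mp ⟨b, hb⟩
  have hpath : IsPathConnected (connectedComponentIn {y | f y < s} a) :=
    (isOpen_lt hf continuous_const).connectedComponentIn.isConnected_iff_isPathConnected.mp
      (isConnected_connectedComponentIn_iff.mpr ha)
  obtain ⟨γ, hγ⟩ := hpath.joinedIn a (mem_connectedComponentIn ha) b hb
  obtain ⟨_, ⟨τ, rfl⟩, hmax⟩ :=
    (isCompact_range γ.continuous).exists_isMaxOn (range_nonempty γ) hf.continuousOn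
  have hτ : f (γ τ) < s := connectedComponentIn_subset {y | f y < s} a (hγ τ)
  refine ⟨f (γ τ), hτ, ?_⟩
  exact (isConnected_range γ.continuous).isPreconnected.subset_connectedComponentIn
    ⟨0, γ.source⟩ (fun y hy => hmax hy) ⟨1, γ.target⟩

theorem mem_connectedComponentIn_le_of_forall_lt [T2Space X]
    (hcpt : ∀ s, IsCompact {y | f y ≤ s}) {s : ℝ} {a b : X} (ha : f a ≤ s)
    (hb : ∀ t > s, b ∈ connectedComponentIn {y | f y ≤ t} a) :
    b ∈ connectedComponentIn {y | f y ≤ s} a := by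
  let C : Ioi s → Set X := fun t => connectedComponentIn {y | f y ≤ t} a
  have : Nonempty (Ioi s) := ⟨⟨s + 1, by simp⟩⟩
  have hdir : Directed (· ⊇ ·) C := fun t t' =>
    ⟨⟨min (t : ℝ) t', mem_Ioi.mpr (lt_min t.2 t'.2)⟩,
      connectedComponentIn_mono a <| ofPred_subset_ofPred.mpr fun _ hy =>
        hy.trans (min_le_left _ _),
      connectedComponentIn_mono a <| ofPred_subset_ofPred.mpr fun _ hy =>
        hy.trans (min_le_right _ _)⟩
  have hC : IsConnected (⋂ t, C t) := isConnected_iInter_of_directed hdir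
    (fun t => (hcpt t).of_isClosed_subset ((hcpt t).isClosed.connectedComponentIn a)
      (connectedComponentIn_subset _ _))
    fun t => isConnected_connectedComponentIn_iff.mpr (ha.trans t.2.le)
  refine hC.isPreconnected.subset_connectedComponentIn
    (mem_iInter.mpr fun t => mem_connectedComponentIn (ha.trans t.2.le)) (fun y hy => ?_)
    (mem_iInter.mpr fun t => hb t t.2)
  exact le_of_forall_gt_imp_ge_of_dense fun t ht =>
    connectedComponentIn_subset {y | f y ≤ t} a (mem_iInter.mp hy ⟨t, ht⟩)

theorem mem_connectedComponentIn_le_of_isSublevelRegularAt [T2Space X]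
    [LocallyPathConnectedSpace X] (hf : Continuous f) (hcpt : ∀ s, IsCompact {y | f y ≤ s})
    {r : ℝ} (hreg : ∀ x, r < f x → IsSublevelRegularAt f (f x) x) {a b : X} (ha : f a ≤ r)
    (hbr : f b ≤ r) {s : ℝ} (hb : b ∈ connectedComponentIn {y | f y ≤ s} a) :
    b ∈ connectedComponentIn {y | f y ≤ r} a := by
  set C : ℝ → Set X := fun t => connectedComponentIn {y | f y ≤ t} a
  have hC : Monotone C := fun t t' h =>
    connectedComponentIn_mono a (ofPred_subset_ofPred.mpr fun _ hy => hy.trans h)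
  set M := {t | r ≤ t ∧ b ∈ C t}
  have hM : M.Nonempty := ⟨max r s, le_max_left _ _, hC (le_max_right _ _) hb⟩
  have hMbdd : BddBelow M := ⟨r, fun t ht => ht.1⟩
  -- `t₀` is the lowest level at which `a` and `b` are joined. If `t₀ > r`, regularity at level
  -- `t₀` puts `b` in the component of `a` in `{f < t₀}`, and a path there joins them lower down.
  set t₀ := sInf M
  have hrt₀ : r ≤ t₀ := le_csInf hM fun t ht => ht.1
  have hbt₀ : b ∈ C t₀ :=
    mem_connectedComponentIn_le_of_forall_lt hcpt (ha.trans hrt₀) fun t ht => by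
      obtain ⟨t', ht', ht't⟩ := exists_lt_of_csInf_lt hM ht
      exact hC ht't.le ht'.2
  obtain hr | hr := hrt₀.eq_or_lt
  · rwa [hr]
  have hbG : b ∈ connectedComponentIn {y | f y < t₀} a := by
    have hbcl := connectedComponentIn_le_subset_closure_connectedComponentIn_lt hf
      (fun x hx => by rw [← hx]; exact hreg x (hx ▸ hr)) (ha.trans_lt hr) hbt₀
    have hbt₀' : f b < t₀ := hbr.trans_lt hr
    obtain ⟨N, -, hbN, hNG, -⟩ := (isSublevelRegularAt_of_lt hf hbt₀').exists_nhds_subset hbcl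
    exact hNG ⟨hbN, hbt₀'⟩
  obtain ⟨t, ht, hbt⟩ := exists_lt_mem_connectedComponentIn_le hf hbG
  exact absurd (csInf_le hMbdd ⟨le_max_left r t, hC (le_max_right r t) hbt⟩)
    (max_lt hr ht).not_ge

end Sublevel

theorem OpenPartialHomeomorph.isSublevelRegularAt_norm {X E : Type*} [TopologicalSpace X]
    [NormedAddCommGroup E] [NormedSpace ℝ E] (e : OpenPartialHomeomorph X E) {x : X}
    (hx : x ∈ e.source) (hex : e x ≠ 0) : IsSublevelRegularAt (fun y => ‖e y‖) ‖e x‖ x := by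
  obtain ⟨δ, hδ, hV⟩ := Metric.isOpen_iff.mp e.open_target (e x) (e.map_source hx)
  set V := ball (e x) δ
  have hlt : e.source ∩ e ⁻¹' V ∩ {y | ‖e y‖ < ‖e x‖} = e.symm '' (V ∩ ball 0 ‖e x‖) := by
    rw [e.symm_image_eq_source_inter_preimage (inter_subset_left.trans hV)]
    ext y
    simp [and_assoc]
  refine ⟨e.source ∩ e ⁻¹' V, e.isOpen_inter_preimage isOpen_ball, ⟨hx, mem_ball_self hδ⟩, ?_, ?_⟩
  · rw [hlt]
    exact ((convex_ball _ _).inter (convex_ball _ _)).isPreconnected.image _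
      (e.symm.continuousOn.mono (inter_subset_left.trans hV))
  · rintro y ⟨⟨hy, hyV⟩, hyle⟩
    have hey : e y ∈ closure (V ∩ ball 0 ‖e x‖) := by
      refine isOpen_ball.inter_closure ⟨hyV, ?_⟩
      rw [closure_ball _ (norm_ne_zero_iff.mpr hex)]
      simpa using hyle
    rw [hlt, ← e.left_inv hy]
    exact (e.continuousAt_symm (e.map_source hy)).continuousWithinAt.mem_closure_image hey

namespace Polynomial

theorem isCompact_setOf_norm_eval_le (Q : ℂ[X]) (hQ : 0 < Q.degree) (s : ℝ) :
    IsCompact {z | ‖Q.eval z‖ ≤ s} := by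
  convert (Q.isProperMap_eval hQ).isCompact_preimage (isCompact_closedBall (0 : ℂ) s) using 1
  ext z
  simp

theorem isConnected_setOf_norm_eval_le (Q : ℂ[X]) (hQ : 0 < Q.degree) {r : ℝ} (hr : 0 ≤ r)
    (hcrit : ∀ z, Q.derivative.eval z = 0 → ‖Q.eval z‖ ≤ r) :
    IsConnected {z | ‖Q.eval z‖ ≤ r} := by
  have hreg : ∀ z, r < ‖Q.eval z‖ → IsSublevelRegularAt (fun z => ‖Q.eval z‖) ‖Q.eval z‖ z := by
    intro z hz
    have hQ' : Q.derivative.eval z ≠ 0 := fun h => (hcrit z h).not_gt hz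
    have hstrict := (Q.hasStrictDerivAt z).hasStrictFDerivAt_equiv hQ'
    exact (hstrict.toOpenPartialHomeomorph _).isSublevelRegularAt_norm
      hstrict.mem_toOpenPartialHomeomorph_source (norm_pos_iff.mp (hr.trans_lt hz))
  obtain ⟨z₀, hz₀⟩ := Complex.exists_root hQ
  have hz₀r : ‖Q.eval z₀‖ ≤ r := by simpa [hz₀.eq_zero] using hr
  suffices h : {z | ‖Q.eval z‖ ≤ r} ⊆ connectedComponentIn {z | ‖Q.eval z‖ ≤ r} z₀ by
    rw [← (connectedComponentIn_subset _ _).antisymm h]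
    exact isConnected_connectedComponentIn_iff.mpr hz₀r
  intro b hb
  obtain ⟨s, hs⟩ := (isCompact_closedBall (0 : ℂ) (max ‖z₀‖ ‖b‖)).exists_bound_of_continuousOn
    Q.continuous.continuousOn
  refine mem_connectedComponentIn_le_of_isSublevelRegularAt Q.continuous.norm
    (Q.isCompact_setOf_norm_eval_le hQ) hreg hz₀r hb (s := s) ?_
  exact (convex_closedBall _ _).isPreconnected.subset_connectedComponentIn
    (mem_closedBall_zero_iff.mpr (le_max_left _ _)) hs
    (mem_closedBall_zero_iff.mpr (le_max_right _ _))

theorem exists_lt_derivative_eval_iterate_eq_zero {R : Type*} [CommRing R] [IsDomain R]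
    (p : R[X]) {n : ℕ} {z : R} (hz : (p.comp^[n] X).derivative.eval z = 0) :
    ∃ k < n, p.derivative.eval ((fun w => p.eval w)^[k] z) = 0 := by
  induction n with
  | zero => simp at hz
  | succ n ih =>
    rw [Function.iterate_succ_apply', derivative_comp, eval_mul, eval_comp, mul_eq_zero] at hz
    rcases hz with hz | hz
    · obtain ⟨k, hk, h⟩ := ih hz
      exact ⟨k, hk.trans n.lt_succ_self, h⟩
    · exact ⟨n, n.lt_succ_self, by simpa using hz⟩

theorem exists_two_mul_norm_le_norm_eval {𝕜 : Type*} [NormedField 𝕜] (P : 𝕜[X])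
    (hd : 2 ≤ P.natDegree) : ∃ R, 0 ≤ R ∧ ∀ z : 𝕜, R < ‖z‖ → 2 * ‖z‖ ≤ ‖P.eval z‖ := by
  have hdeg : 0 < P.divX.degree := by
    rw [← natDegree_pos_iff_degree_pos, natDegree_divX_eq_natDegree_tsub_one]
    omega
  have h : ∀ᶠ z in Bornology.cobounded 𝕜, 2 * ‖z‖ ≤ ‖P.eval z‖ := by
    filter_upwards
      [(P.divX.tendsto_norm_atTop hdeg tendsto_norm_cobounded_atTop).eventually_ge_atTop 3,
      tendsto_norm_cobounded_atTop.eventually_ge_atTop ‖P.coeff 0‖] with z h3 hc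
    have hP : P.eval z = P.divX.eval z * z + P.coeff 0 := by
      conv_lhs => rw [← divX_mul_X_add P]
      simp
    have h3z : 3 * ‖z‖ ≤ ‖P.divX.eval z * z‖ := by
      rw [norm_mul]
      exact mul_le_mul_of_nonneg_right h3 (norm_nonneg z)
    rw [hP]
    linarith [norm_sub_le_norm_add (P.divX.eval z * z) (P.coeff 0)]
  rw [← comap_norm_atTop, eventually_comap, eventually_atTop] at h
  obtain ⟨R, hR⟩ := h
  exact ⟨max R 0, le_max_right _ _, fun z hz => hR ‖z‖ ((le_max_left _ _).trans hz.le) z rfl⟩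

def filledJuliaSet (P : ℂ[X]) : Set ℂ :=
  {z | ∃ M : ℝ, ∀ n : ℕ, ‖(fun w => P.eval w)^[n] z‖ ≤ M}

theorem mem_filledJuliaSet_of_iterate_mem {P : ℂ[X]} {z : ℂ} {k : ℕ}
    (hz : (fun w => P.eval w)^[k] z ∈ P.filledJuliaSet) : z ∈ P.filledJuliaSet := by
  induction k generalizing z with
  | zero => exact hz
  | succ k ih =>
    obtain ⟨M, hM⟩ := ih (z := P.eval z) hz
    refine ⟨max M ‖z‖, fun n => ?_⟩
    cases n with
    | zero => exact le_max_right _ _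
    | succ n => exact (hM n).trans (le_max_left _ _)

theorem two_pow_mul_norm_le_norm_iterate {P : ℂ[X]} {R : ℝ}
    (hR : ∀ z : ℂ, R < ‖z‖ → 2 * ‖z‖ ≤ ‖P.eval z‖) {z : ℂ} (hz : R < ‖z‖) (k : ℕ) :
    2 ^ k * ‖z‖ ≤ ‖(fun w => P.eval w)^[k] z‖ := by
  induction k with
  | zero => simp
  | succ k ih =>
    have hk : R < ‖(fun w => P.eval w)^[k] z‖ :=
      hz.trans_le ((le_mul_of_one_le_left (norm_nonneg z) (one_le_pow₀ one_le_two)).trans ih)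
    rw [Function.iterate_succ_apply', pow_succ]
    linarith [hR _ hk]

theorem norm_iterate_le_of_mem_filledJuliaSet {P : ℂ[X]} {R : ℝ} (hR0 : 0 ≤ R)
    (hR : ∀ z : ℂ, R < ‖z‖ → 2 * ‖z‖ ≤ ‖P.eval z‖) {z : ℂ} (hz : z ∈ P.filledJuliaSet)
    (n : ℕ) : ‖(fun w => P.eval w)^[n] z‖ ≤ R := by
  by_contra! hn
  obtain ⟨M, hM⟩ := hz
  obtain ⟨k, hk⟩ := pow_unbounded_of_one_lt (M / ‖(fun w => P.eval w)^[n] z‖) one_lt_two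
  rw [div_lt_iff₀ (hR0.trans_lt hn)] at hk
  have := two_pow_mul_norm_le_norm_iterate hR hn k
  rw [← Function.iterate_add_apply] at this
  linarith [hM (k + n)]

theorem filledJuliaSet_eq_iInter {P : ℂ[X]} {R : ℝ} (hR0 : 0 ≤ R)
    (hR : ∀ z : ℂ, R < ‖z‖ → 2 * ‖z‖ ≤ ‖P.eval z‖) :
    P.filledJuliaSet = ⋂ n, {z | ‖(P.comp^[n] X).eval z‖ ≤ R} := by
  ext z
  simp only [mem_iInter, mem_ofPred_eq, iterate_comp_eval, eval_X]
  exact ⟨norm_iterate_le_of_mem_filledJuliaSet hR0 hR, fun h => ⟨R, h⟩⟩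

theorem antitone_setOf_norm_iterate_comp_eval_le {P : ℂ[X]} {R : ℝ} (hR0 : 0 ≤ R)
    (hR : ∀ z : ℂ, R < ‖z‖ → 2 * ‖z‖ ≤ ‖P.eval z‖) :
    Antitone fun n => {z | ‖(P.comp^[n] X).eval z‖ ≤ R} := by
  refine antitone_nat_of_succ_le fun n z hz => ?_
  simp only [mem_ofPred_eq, iterate_comp_eval, eval_X] at hz ⊢
  rw [Function.iterate_succ_apply'] at hz
  by_contra! hn
  linarith [hR _ hn]

end Polynomial

/-- If the filled Julia set of a polynomial of degree ≥ 2 is not connected,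
then some critical point of P has unbounded forward orbit. -/
theorem stmt6 (P : Polynomial ℂ) (hd : 2 ≤ P.natDegree)
    (K : Set ℂ)
    (hK : K = {z : ℂ | ∃ M : ℝ, ∀ n : ℕ, ‖(fun w => P.eval w)^[n] z‖ ≤ M})
    (hconn : ¬ IsConnected K) :
    ∃ z : ℂ, P.derivative.eval z = 0 ∧ z ∉ K := by
  obtain rfl : K = P.filledJuliaSet := hK
  by_contra! hcrit
  obtain ⟨R, hR0, hR⟩ := P.exists_two_mul_norm_le_norm_eval hd
  have hdeg (n : ℕ) : 0 < (P.comp^[n] X).degree := by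
    rw [← natDegree_pos_iff_degree_pos, natDegree_iterate_comp, natDegree_X, mul_one]
    exact Nat.pow_pos (by omega)
  apply hconn
  rw [filledJuliaSet_eq_iInter hR0 hR]
  refine isConnected_iInter_of_directed
    (antitone_setOf_norm_iterate_comp_eval_le hR0 hR).directed_ge
    (fun n => isCompact_setOf_norm_eval_le _ (hdeg n) R)
    fun n => isConnected_setOf_norm_eval_le _ (hdeg n) hR0 fun z hz => ?_
  obtain ⟨k, -, hk⟩ := P.exists_lt_derivative_eval_iterate_eq_zero hz
  have hzK : z ∈ P.filledJuliaSet := mem_filledJuliaSet_of_iterate_mem (hcrit _ hk)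
  simpa using norm_iterate_le_of_mem_filledJuliaSet hR0 hR hzK n
end

section
/- Let d ≥ 1 be a natural number, let U ⊆ ℂ be a nonempty, bounded, open, simply connected set, and let W ⊆ ℂ be an open set containing the closure of U. Let g : Fin d → (ℂ → ℂ) be such that each g_i is holomorphic on W, g_i maps the closure of U into U, and the sets g_i(closure U) for distinct i are pairwise disjoint. Let f : ℂ → ℂ be a function satisfying f(g_i(z)) = z for every i and every z in the closure of U. Let X = {z ∈ ℂ : for every n ≥ 0, f^[n](z) ∈ ⋃_i g_i(closure U)}. Then there exists a continuous injective map h from the product space (Fin d)^ℕ (with the product topology) to ℂ whose range is exactly X and which satisfies f(h(σ)) = h(σ ∘ succ) for every σ : ℕ → Fin d; in particular h is a homeomorphism from (Fin d)^ℕ onto X conjugating the full one-sided shift on d symbols to f restricted to X. -/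
/-!
Write `wordComp g σ n = g (σ 0) ∘ ⋯ ∘ g (σ (n - 1))`. Everything rests on the images
`wordComp g σ n '' closure U` shrinking to points uniformly in `σ`: then `h σ` is the point of
`⋂ n, wordComp g σ n '' closure U`, the relations `f ∘ g i = id` give the conjugacy and the
description of the range, disjointness of the `g i '' closure U` gives injectivity, and the
uniformity gives continuity.

For the shrinking, by the Schwarz lemma holomorphic self-maps of `U` are uniformly Lipschitz on the
compact set `K = ⋃ i, g i '' closure U ⊆ U`, so the compositions form an equicontinuous family. If
the shrinking failed, compactness of the space of words and Arzelà–Ascoli give a word `σ`, a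
nonconstant limit `F` of prefixes `wordComp g σ (φ k)`, and a limit `T` of the blocks between
consecutive prefixes, with `F = F ∘ T` and `T (closure U) ⊆ K`. Hence `F '' U = F '' K` is compact,
and by the open mapping theorem the holomorphic map `F` is constant on `U`, a contradiction.
-/

open Filter Topology Set Function Metric PiNat
open scoped NNReal

theorem UniformEquicontinuousOn.comp_mapsTo {ι κ α β γ : Type*} [UniformSpace α]
    [UniformSpace β] [UniformSpace γ] {F : ι → β → γ} {G : κ → α → β} {A : Set α} {K : Set β}
    (hF : UniformEquicontinuousOn F K) (hG : UniformEquicontinuousOn G A)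
    (hGK : ∀ j, MapsTo (G j) A K) :
    UniformEquicontinuousOn (fun p : ι × κ => F p.1 ∘ G p.2) A := by
  intro u hu
  have hV := eventually_inf_principal.1 (hF u hu)
  filter_upwards [hG _ hV, mem_inf_of_right (mem_principal_self (A ×ˢ A))] with xy hxy hA p
  exact hxy p.2 ⟨hGK _ hA.1, hGK _ hA.2⟩ p.1

theorem exists_lipschitzOnWith_of_mapsTo {Ω K B : Set ℂ} (hΩ : IsOpen Ω) (hK : IsCompact K)
    (hKΩ : K ⊆ Ω) (hB : Bornology.IsBounded B) :
    ∃ C : ℝ≥0, ∀ F : ℂ → ℂ, DifferentiableOn ℂ F Ω → MapsTo F Ω B → LipschitzOnWith C F K := by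
  obtain ⟨ρ, hρ, hρΩ⟩ := hK.exists_thickening_subset_open hΩ hKΩ
  have hR : 0 < diam B + 1 := by linarith [diam_nonneg (s := B)]
  refine ⟨⟨(diam B + 1) / ρ, by positivity⟩, fun F hFd hFB => ?_⟩
  refine LipschitzOnWith.of_dist_le_mul fun x hx y hy => ?_
  have hdiam : ∀ {z w}, z ∈ Ω → w ∈ Ω → dist (F z) (F w) ≤ diam B := fun hz hw =>
    dist_le_diam_of_mem hB (hFB hz) (hFB hw)
  rcases lt_or_ge (dist x y) ρ with hxy | hxy
  · -- near the diagonal, the Schwarz lemma on `ball y ρ ⊆ Ω`; far from it, the diameter of `B`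
    have hball : ball y ρ ⊆ Ω := (ball_subset_thickening hy ρ).trans hρΩ
    refine Complex.dist_le_div_mul_dist_of_mapsTo_ball (hFd.mono hball) (fun z hz => ?_) hxy
    exact mem_closedBall.2 ((hdiam (hball hz) (hKΩ hy)).trans (by linarith))
  · calc dist (F x) (F y) ≤ diam B := hdiam (hKΩ hx) (hKΩ hy)
      _ ≤ (diam B + 1) / ρ * dist x y := by
        rw [div_mul_eq_mul_div, le_div_iff₀ hρ]
        nlinarith [diam_nonneg (s := B)]

theorem DifferentiableOn.exists_forall_eq_of_image_subset {U K : Set ℂ} {F : ℂ → ℂ}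
    (hF : DifferentiableOn ℂ F U) (hU : IsOpen U) (hUc : IsPreconnected U) (hK : IsCompact K)
    (hKU : K ⊆ U) (hFK : F '' U ⊆ F '' K) : ∃ w, ∀ z ∈ U, F z = w := by
  rcases U.eq_empty_or_nonempty with rfl | ⟨z, hz⟩
  · exact ⟨0, fun _ h => h.elim⟩
  refine ((hF.analyticOnNhd hU).is_constant_or_isOpen hUc).resolve_right fun hopen => ?_
  have hcpt : IsCompact (F '' U) := by
    rw [hFK.antisymm (image_mono hKU)]
    exact hK.image_of_continuousOn (hF.continuousOn.mono hKU)
  -- `F '' U` would be a nonempty compact open subset of `ℂ`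
  rcases isClopen_iff.1 ⟨hcpt.isClosed, hopen U subset_rfl hU⟩ with h | h
  · exact (h ▸ mem_image_of_mem F hz : F z ∈ (∅ : Set ℂ))
  · exact noncompact_univ ℂ (h ▸ hcpt)

theorem exists_tendstoUniformlyOn_subseq {α β : Type*} [TopologicalSpace α] [MetricSpace β]
    {A : Set α} {K : Set β} (hA : IsCompact A) (hK : IsCompact K) {F : ℕ → α → β}
    (hFK : ∀ n, MapsTo (F n) A K) (hF : EquicontinuousOn F A) :
    ∃ (φ : ℕ → ℕ) (G : α → β), StrictMono φ ∧ TendstoUniformlyOn (fun k => F (φ k)) G atTop A := by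
  have : CompactSpace A := isCompact_iff_compactSpace.mp hA
  have hF' := (equicontinuous_restrict_iff F).2 hF
  let Fb : ℕ → BoundedContinuousFunction A β := fun n =>
    .mkOfCompact ⟨A.domRestrict (F n), hF'.continuous n⟩
  have hcpt : IsCompact (closure (range Fb)) := by
    refine BoundedContinuousFunction.arzela_ascoli K hK _ ?_ fun x u hu => ?_
    · rintro _ x ⟨n, rfl⟩
      exact hFK n x.2
    · exact (hF' x u hu).mono fun y hy ⟨_, n, hn⟩ => hn ▸ hy n
  obtain ⟨G, -, φ, hφ, hG⟩ := hcpt.isSeqCompact fun n => subset_closure (mem_range_self n)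
  classical
  refine ⟨φ, fun x => if hx : x ∈ A then G ⟨x, hx⟩ else F 0 x, hφ, ?_⟩
  have hGcoe : (fun x => if hx : x ∈ A then G ⟨x, hx⟩ else F 0 x) ∘ Subtype.val = G := by
    ext x
    simp [x.2]
  rw [tendstoUniformlyOn_iff_tendstoUniformly_comp_coe, hGcoe]
  exact BoundedContinuousFunction.tendsto_iff_tendstoUniformly.1 hG

theorem exists_le_dist_of_tendstoUniformlyOn {α β : Type*} [PseudoMetricSpace α]
    [PseudoMetricSpace β] {A : Set α} (hA : IsCompact A) {F : ℕ → α → β} {G : α → β}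
    (hF : TendstoUniformlyOn F G atTop A) (hG : ContinuousOn G A) {ε : ℝ}
    (hε : ∀ n, ∃ x ∈ A, ∃ y ∈ A, ε ≤ dist (F n x) (F n y)) :
    ∃ x ∈ A, ∃ y ∈ A, ε ≤ dist (G x) (G y) := by
  choose x hx y hy hxy using hε
  obtain ⟨⟨a, b⟩, ⟨ha, hb⟩, ψ, hψ, hlim⟩ :=
    (hA.prod hA).tendsto_subseq fun n => (⟨hx n, hy n⟩ : (x n, y n) ∈ A ×ˢ A)
  have hFψ : TendstoUniformlyOn (fun j => F (ψ j)) G atTop A := fun u hu =>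
    hψ.tendsto_atTop.eventually (hF u hu)
  have key : ∀ {z : ℕ → α} {c}, (∀ n, z n ∈ A) → c ∈ A → Tendsto (z ∘ ψ) atTop (𝓝 c) →
      Tendsto (fun j => F (ψ j) (z (ψ j))) atTop (𝓝 (G c)) := fun hz hc hzc =>
    hFψ.tendsto_comp (hG _ hc) (tendsto_nhdsWithin_iff.2 ⟨hzc, Eventually.of_forall fun _ => hz _⟩)
  exact ⟨a, ha, b, hb, ge_of_tendsto ((key hx ha ((continuous_fst.tendsto _).comp hlim)).dist
    (key hy hb ((continuous_snd.tendsto _).comp hlim))) (Eventually.of_forall fun j => hxy (ψ j))⟩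

theorem exists_tendstoUniformlyOn_eqOn_comp {α : Type*} [MetricSpace α] {A K : Set α}
    (hA : IsCompact A) (hK : IsClosed K) (hKA : K ⊆ A) {G : ℕ → α → α} {B : ℕ → ℕ → α → α}
    (hGB : ∀ m n, G (m + n + 1) = G m ∘ B m n) (hGA : ∀ n, MapsTo (G n) A A)
    (hBK : ∀ m n, MapsTo (B m n) A K) (hG : EquicontinuousOn G A)
    (hB : EquicontinuousOn (fun p : ℕ × ℕ => B p.1 p.2) A) :
    ∃ (φ : ℕ → ℕ) (F T : α → α), TendstoUniformlyOn (fun k => G (φ k)) F atTop A ∧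
      ContinuousOn F A ∧ MapsTo T A K ∧ EqOn F (F ∘ T) A := by
  obtain ⟨φ, F, hφ, hF⟩ := exists_tendstoUniformlyOn_subseq hA hA hGA hG
  have hFc : ContinuousOn F A := hF.continuousOn (Frequently.of_forall fun k => hG.continuousOn _)
  set b : ℕ → ℕ := fun k => φ (k + 1) - φ k - 1
  have hb : ∀ k, G (φ (k + 1)) = G (φ k) ∘ B (φ k) (b k) := fun k => by
    rw [← hGB]
    congr 1
    have := hφ (lt_add_one k)
    simp only [b]
    omega
  obtain ⟨ψ, T, hψ, hT⟩ := exists_tendstoUniformlyOn_subseq hA hA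
    (fun k => (hBK _ _).mono_right hKA) (hB.comp fun k => (φ k, b k))
  have hTK : MapsTo T A K := fun z hz =>
    hK.mem_of_tendsto (hT.tendsto_at hz) (Eventually.of_forall fun j => hBK _ _ hz)
  refine ⟨φ, F, T, hF, hFc, hTK, fun z hz => ?_⟩
  have hFψ : TendstoUniformlyOn (fun j => G (φ (ψ j))) F atTop A := fun u hu =>
    hψ.tendsto_atTop.eventually (hF u hu)
  have h₁ : Tendsto (fun j => G (φ (ψ j + 1)) z) atTop (𝓝 (F z)) :=
    (hF.tendsto_at hz).comp ((tendsto_add_atTop_nat 1).comp hψ.tendsto_atTop)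
  have h₂ : Tendsto (fun j => G (φ (ψ j + 1)) z) atTop (𝓝 (F (T z))) := by
    simp only [hb]
    exact hFψ.tendsto_comp (hFc _ (hKA (hTK hz)))
      (tendsto_nhdsWithin_iff.2 ⟨hT.tendsto_at hz, Eventually.of_forall fun j => hKA (hBK _ _ hz)⟩)
  exact tendsto_nhds_unique h₁ h₂

namespace ItineraryCoding

variable {ι α : Type*}

/-- `wordComp g σ n = g (σ 0) ∘ g (σ 1) ∘ ⋯ ∘ g (σ (n - 1))`. -/
def wordComp (g : ι → α → α) (σ : ℕ → ι) : ℕ → α → α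
  | 0 => id
  | n + 1 => wordComp g σ n ∘ g (σ n)

variable {g : ι → α → α}

theorem wordComp_succ (σ : ℕ → ι) (n : ℕ) :
    wordComp g σ (n + 1) = wordComp g σ n ∘ g (σ n) :=
  rfl

theorem wordComp_add (σ : ℕ → ι) (m n : ℕ) :
    wordComp g σ (m + n) = wordComp g σ m ∘ wordComp g (fun j => σ (m + j)) n := by
  induction n with
  | zero => rfl
  | succ n ih => rw [← add_assoc, wordComp_succ, ih, wordComp_succ, comp_assoc]

theorem wordComp_succ' (σ : ℕ → ι) (n : ℕ) :
    wordComp g σ (n + 1) = g (σ 0) ∘ wordComp g (σ ∘ Nat.succ) n := by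
  induction n with
  | zero => rfl
  | succ n ih => rw [wordComp_succ, ih, wordComp_succ, comp_assoc]; rfl

theorem wordComp_congr {σ τ : ℕ → ι} {n : ℕ} (h : τ ∈ cylinder σ n) :
    wordComp g τ n = wordComp g σ n := by
  induction n with
  | zero => rfl
  | succ n ih =>
    rw [wordComp_succ, wordComp_succ, ih (cylinder_anti σ n.le_succ h), h n n.lt_succ_self]

theorem mapsTo_wordComp {s : Set α} (hg : ∀ i, MapsTo (g i) s s) (σ : ℕ → ι) (n : ℕ) :
    MapsTo (wordComp g σ n) s s := by
  induction n with
  | zero => exact mapsTo_id s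
  | succ n ih => exact ih.comp (hg _)

theorem image_wordComp_succ_subset {s : Set α} (hg : ∀ i, MapsTo (g i) s s) (σ : ℕ → ι)
    (n : ℕ) : wordComp g σ (n + 1) '' s ⊆ wordComp g σ n '' s := by
  rw [wordComp_succ, image_comp]
  exact image_mono (hg _).image_subset

theorem continuousOn_wordComp [TopologicalSpace α] {s : Set α} (hgs : ∀ i, MapsTo (g i) s s)
    (hg : ∀ i, ContinuousOn (g i) s) (σ : ℕ → ι) (n : ℕ) : ContinuousOn (wordComp g σ n) s := by
  induction n with
  | zero => exact continuousOn_id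
  | succ n ih => exact ih.comp (hg _) (hgs _)

theorem differentiableOn_wordComp {𝕜 : Type*} [NontriviallyNormedField 𝕜] {g : ι → 𝕜 → 𝕜}
    {s : Set 𝕜} (hgs : ∀ i, MapsTo (g i) s s) (hg : ∀ i, DifferentiableOn 𝕜 (g i) s)
    (σ : ℕ → ι) (n : ℕ) : DifferentiableOn 𝕜 (wordComp g σ n) s := by
  induction n with
  | zero => exact differentiableOn_id
  | succ n ih => exact ih.comp (hg _) (hgs _)

theorem mem_image_wordComp {A : Set α} (hgA : ∀ i, MapsTo (g i) A A) {f : α → α}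
    (hfg : ∀ i, ∀ z ∈ A, f (g i z) = z) {σ : ℕ → ι} {z : α}
    (hz : ∀ k, f^[k] z ∈ g (σ k) '' A) (n : ℕ) : z ∈ wordComp g σ n '' A := by
  induction n generalizing σ z with
  | zero => obtain ⟨u, hu, rfl⟩ := hz 0; exact ⟨_, hgA _ hu, rfl⟩
  | succ n ih =>
    obtain ⟨u, hu, rfl⟩ := hz 0
    obtain ⟨v, hv, hvu⟩ := ih (σ := σ ∘ Nat.succ) (z := u) fun k => by
      simpa only [iterate_succ_apply, hfg _ _ hu, comp_apply, Nat.succ_eq_add_one] using hz (k + 1)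
    exact ⟨v, hv, by rw [wordComp_succ', comp_apply, hvu]⟩

section Coding

variable [MetricSpace α]

theorem exists_forall_lt_dist_wordComp [TopologicalSpace ι] [DiscreteTopology ι] [CompactSpace ι]
    {A : Set α} (hgA : ∀ i, MapsTo (g i) A A) {ε : ℝ}
    (h : ∀ N, ∃ σ : ℕ → ι, ∃ x ∈ A, ∃ y ∈ A, ε < dist (wordComp g σ N x) (wordComp g σ N y)) :
    ∃ σ : ℕ → ι, ∀ N, ∃ x ∈ A, ∃ y ∈ A, ε < dist (wordComp g σ N x) (wordComp g σ N y) := by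
  set S : ℕ → Set (ℕ → ι) := fun N =>
    {σ | ∃ x ∈ A, ∃ y ∈ A, ε < dist (wordComp g σ N x) (wordComp g σ N y)}
  -- membership in `S N` only depends on the first `N` letters
  have hS : ∀ N, IsClosed (S N) := fun N => isOpen_compl_iff.1 <|
    isOpen_iff_forall_mem_open.2 fun σ hσ => ⟨cylinder σ N, fun τ hτ hτS => hσ <| by
      simpa only [S, mem_ofPred_eq, wordComp_congr hτ] using hτS,
      isOpen_cylinder (E := fun _ => ι) σ N, self_mem_cylinder σ N⟩
  have hanti : ∀ N, S (N + 1) ⊆ S N := by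
    rintro N σ ⟨x, hx, y, hy, hxy⟩
    exact ⟨_, hgA _ hx, _, hgA _ hy, hxy⟩
  obtain ⟨σ, hσ⟩ := IsCompact.nonempty_iInter_of_sequence_nonempty_isCompact_isClosed S hanti h
    (hS 0).isCompact hS
  exact ⟨σ, mem_iInter.1 hσ⟩

def UniformlyShrinking (g : ι → α → α) (A : Set α) : Prop :=
  ∀ ε > 0, ∃ N, ∀ σ : ℕ → ι, ∀ x ∈ A, ∀ y ∈ A, dist (wordComp g σ N x) (wordComp g σ N y) ≤ ε

structure IsShrinkingIFS (g : ι → α → α) (A : Set α) : Prop where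
  isCompact : IsCompact A
  nonempty : A.Nonempty
  mapsTo : ∀ i, MapsTo (g i) A A
  continuousOn : ∀ i, ContinuousOn (g i) A
  shrinking : UniformlyShrinking g A

/-- The point with itinerary `σ`: the unique point of `⋂ n, wordComp g σ n '' A`. -/
noncomputable def codingMap [Nonempty α] (g : ι → α → α) (A : Set α) (σ : ℕ → ι) : α :=
  Classical.epsilon fun z => ∀ n, z ∈ wordComp g σ n '' A

namespace IsShrinkingIFS

variable [Nonempty α] {A : Set α}

theorem codingMap_mem (hg : IsShrinkingIFS g A) (σ : ℕ → ι) (n : ℕ) :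
    codingMap g A σ ∈ wordComp g σ n '' A := by
  have hne : (⋂ n, wordComp g σ n '' A).Nonempty :=
    IsCompact.nonempty_iInter_of_sequence_nonempty_isCompact_isClosed _
      (image_wordComp_succ_subset hg.mapsTo σ) (fun n => hg.nonempty.image _)
      (hg.isCompact.image_of_continuousOn (continuousOn_wordComp hg.mapsTo hg.continuousOn σ 0))
      fun n => (hg.isCompact.image_of_continuousOn
        (continuousOn_wordComp hg.mapsTo hg.continuousOn σ n)).isClosed
  exact Classical.epsilon_spec (p := fun z => ∀ n, z ∈ wordComp g σ n '' A)
    (by simpa only [Set.Nonempty, mem_iInter] using hne) n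

theorem eq_codingMap (hg : IsShrinkingIFS g A) {σ : ℕ → ι} {z : α}
    (hz : ∀ n, z ∈ wordComp g σ n '' A) :
    z = codingMap g A σ := by
  refine dist_le_zero.1 (le_of_forall_pos_le_add fun ε hε => ?_)
  obtain ⟨N, hN⟩ := hg.shrinking ε hε
  obtain ⟨x, hx, rfl⟩ := hz N
  obtain ⟨y, hy, hyσ⟩ := hg.codingMap_mem σ N
  rw [← hyσ, zero_add]
  exact hN σ x hx y hy

theorem codingMap_mem_image (hg : IsShrinkingIFS g A) (σ : ℕ → ι) :
    codingMap g A σ ∈ g (σ 0) '' A :=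
  hg.codingMap_mem σ 1

theorem continuous_codingMap [TopologicalSpace ι] [DiscreteTopology ι] (hg : IsShrinkingIFS g A) :
    Continuous (codingMap g A) := by
  refine Metric.continuous_iff'.2 fun σ ε hε => ?_
  obtain ⟨N, hN⟩ := hg.shrinking (ε / 2) (half_pos hε)
  filter_upwards [(isOpen_cylinder (E := fun _ => ι) σ N).mem_nhds (self_mem_cylinder σ N)]
    with τ hτ
  obtain ⟨x, hx, hxτ⟩ := hg.codingMap_mem τ N
  obtain ⟨y, hy, hyσ⟩ := hg.codingMap_mem σ N
  rw [wordComp_congr hτ] at hxτ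
  rw [← hxτ, ← hyσ]
  exact (hN σ x hx y hy).trans_lt (half_lt_self hε)

variable {f : α → α}

theorem map_codingMap (hg : IsShrinkingIFS g A) (hfg : ∀ i, ∀ z ∈ A, f (g i z) = z)
    (σ : ℕ → ι) : f (codingMap g A σ) = codingMap g A (σ ∘ Nat.succ) := by
  refine hg.eq_codingMap fun n => ?_
  obtain ⟨z, hz, hzσ⟩ := hg.codingMap_mem σ (n + 1)
  rw [wordComp_succ', comp_apply] at hzσ
  rw [← hzσ, hfg _ _ (mapsTo_wordComp hg.mapsTo _ n hz)]
  exact mem_image_of_mem _ hz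

theorem iterate_map_codingMap (hg : IsShrinkingIFS g A) (hfg : ∀ i, ∀ z ∈ A, f (g i z) = z)
    (n : ℕ) (σ : ℕ → ι) :
    f^[n] (codingMap g A σ) = codingMap g A (fun j => σ (j + n)) := by
  induction n generalizing σ with
  | zero => rfl
  | succ n ih => rw [iterate_succ_apply, hg.map_codingMap hfg, ih]; rfl

theorem injective_codingMap (hg : IsShrinkingIFS g A) (hfg : ∀ i, ∀ z ∈ A, f (g i z) = z)
    (hdisj : Pairwise fun i j => Disjoint (g i '' A) (g j '' A)) :
    Injective (codingMap g A) := by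
  intro σ τ hστ
  by_contra hne
  obtain ⟨n, hn⟩ := Function.ne_iff.1 hne
  have hσ := hg.codingMap_mem_image fun j => σ (j + n)
  have hτ := hg.codingMap_mem_image fun j => τ (j + n)
  rw [← hg.iterate_map_codingMap hfg, hστ, hg.iterate_map_codingMap hfg, zero_add] at hσ
  rw [zero_add] at hτ
  exact disjoint_left.1 (hdisj hn) hσ hτ

theorem range_codingMap (hg : IsShrinkingIFS g A) (hfg : ∀ i, ∀ z ∈ A, f (g i z) = z) :
    range (codingMap g A) = {z | ∀ n, f^[n] z ∈ ⋃ i, g i '' A} := by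
  ext z
  constructor
  · rintro ⟨σ, rfl⟩ n
    rw [hg.iterate_map_codingMap hfg]
    exact mem_iUnion.2 ⟨_, hg.codingMap_mem_image _⟩
  · intro hz
    choose σ hσ using fun n => mem_iUnion.1 (hz n)
    exact ⟨σ, (hg.eq_codingMap (mem_image_wordComp hg.mapsTo hfg hσ)).symm⟩

end IsShrinkingIFS

end Coding

section Holomorphic

variable {d : ℕ} {g : Fin d → ℂ → ℂ} {U : Set ℂ}

theorem uniformEquicontinuousOn_wordComp_succ {K : Set ℂ} (hU : IsOpen U)
    (hUb : Bornology.IsBounded U) (hK : IsCompact K) (hKU : K ⊆ U)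
    (hgc : ∀ i, ContinuousOn (g i) (closure U)) (hgd : ∀ i, DifferentiableOn ℂ (g i) U)
    (hgK : ∀ i, MapsTo (g i) (closure U) K) :
    UniformEquicontinuousOn (fun p : (ℕ → Fin d) × ℕ => wordComp g p.1 (p.2 + 1)) (closure U) := by
  have hgU : ∀ i, MapsTo (g i) U U := fun i => ((hgK i).mono_right hKU).mono_left subset_closure
  obtain ⟨C, hC⟩ := exists_lipschitzOnWith_of_mapsTo hU hK hKU hUb
  have hW : UniformEquicontinuousOn (fun p : (ℕ → Fin d) × ℕ => wordComp g p.1 p.2) K :=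
    LipschitzOnWith.uniformEquicontinuousOn _ C fun p =>
      hC _ (differentiableOn_wordComp hgU hgd _ _) (mapsTo_wordComp hgU _ _)
  have hg : UniformEquicontinuousOn g (closure U) := uniformEquicontinuousOn_finite.2 fun i =>
    hUb.isCompact_closure.uniformContinuousOn_of_continuous (hgc i)
  exact (hW.comp_mapsTo hg hgK).comp fun p => (p, p.1 p.2)

theorem uniformlyShrinking_of_differentiableOn (hU : IsOpen U) (hUb : Bornology.IsBounded U)
    (hUc : IsPreconnected U) (hgc : ∀ i, ContinuousOn (g i) (closure U))
    (hgd : ∀ i, DifferentiableOn ℂ (g i) U) (hgU : ∀ i, MapsTo (g i) (closure U) U) :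
    UniformlyShrinking g (closure U) := by
  have hA : IsCompact (closure U) := hUb.isCompact_closure
  set K := ⋃ i, g i '' closure U
  have hK : IsCompact K := isCompact_iUnion fun i => hA.image_of_continuousOn (hgc i)
  have hKU : K ⊆ U := iUnion_subset fun i => (hgU i).image_subset
  have hKA : K ⊆ closure U := hKU.trans subset_closure
  have hgK : ∀ i, MapsTo (g i) (closure U) K := fun i x hx =>
    mem_iUnion.2 ⟨i, mem_image_of_mem _ hx⟩
  have hgA : ∀ i, MapsTo (g i) (closure U) (closure U) := fun i => (hgK i).mono_right hKA
  have hequi := (uniformEquicontinuousOn_wordComp_succ hU hUb hK hKU hgc hgd hgK).equicontinuousOn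
  by_contra hns
  unfold UniformlyShrinking at hns
  push Not at hns
  obtain ⟨ε, hε, hfar⟩ := hns
  obtain ⟨σ, hσ⟩ := exists_forall_lt_dist_wordComp hgA hfar
  obtain ⟨φ, F, T, hF, hFc, hTK, hFT⟩ := exists_tendstoUniformlyOn_eqOn_comp hA hK.isClosed hKA
    (G := fun n => wordComp g σ (n + 1))
    (B := fun m n => wordComp g (fun j => σ (m + 1 + j)) (n + 1))
    (fun m n => by rw [show m + n + 1 + 1 = m + 1 + (n + 1) by omega, wordComp_add])
    (fun n => mapsTo_wordComp hgA σ _)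
    (fun m n => by rw [wordComp_succ']; exact (hgK _).comp (mapsTo_wordComp hgA _ _))
    (hequi.comp fun n => (σ, n)) (hequi.comp fun p : ℕ × ℕ => (fun j => σ (p.1 + 1 + j), p.2))
  have hFd : DifferentiableOn ℂ F U :=
    (hF.tendstoLocallyUniformlyOn.mono subset_closure).differentiableOn (Eventually.of_forall
      fun k => differentiableOn_wordComp (fun i => (hgU i).mono_left subset_closure) hgd σ _) hU
  obtain ⟨w, hw⟩ := hFd.exists_forall_eq_of_image_subset hU hUc hK hKU <| by
    rintro _ ⟨z, hz, rfl⟩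
    exact ⟨T z, hTK (subset_closure hz), (hFT (subset_closure hz)).symm⟩
  have hFw : F '' closure U ⊆ {w} := hFc.image_closure.trans <|
    closure_minimal (by rintro _ ⟨z, hz, rfl⟩; exact hw z hz) isClosed_singleton
  obtain ⟨x, hx, y, hy, hxy⟩ := exists_le_dist_of_tendstoUniformlyOn hA hF hFc fun k =>
    (hσ (φ k + 1)).imp fun x => And.imp_right fun ⟨y, hy, h⟩ => ⟨y, hy, h.le⟩
  rw [hFw (mem_image_of_mem F hx), hFw (mem_image_of_mem F hy), dist_self] at hxy
  linarith

end Holomorphic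

end ItineraryCoding

open ItineraryCoding in
theorem stmt10_general (d : ℕ)
    (U : Set ℂ) (hUne : U.Nonempty) (hUb : Bornology.IsBounded U)
    (hUo : IsOpen U) (hUsc : SimplyConnectedSpace U)
    (W : Set ℂ) (hUW : closure U ⊆ W)
    (g : Fin d → ℂ → ℂ)
    (hg : ∀ i, DifferentiableOn ℂ (g i) W)
    (hgU : ∀ i, g i '' closure U ⊆ U)
    (hdisj : ∀ i j : Fin d, i ≠ j → Disjoint (g i '' closure U) (g j '' closure U))
    (f : ℂ → ℂ) (hfg : ∀ i, ∀ z ∈ closure U, f (g i z) = z)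
    (X : Set ℂ)
    (hX : X = {z : ℂ | ∀ n : ℕ, f^[n] z ∈ ⋃ i : Fin d, g i '' closure U}) :
    ∃ h : (ℕ → Fin d) → ℂ, Continuous h ∧ Function.Injective h ∧
      Set.range h = X ∧ ∀ σ : ℕ → Fin d, f (h σ) = h (σ ∘ Nat.succ) := by
  have hgc : ∀ i, ContinuousOn (g i) (closure U) := fun i => (hg i).continuousOn.mono hUW
  have hgU' : ∀ i, MapsTo (g i) (closure U) U := fun i => mapsTo_iff_image_subset.2 (hgU i)
  have hUc : IsPreconnected U :=
    (isPathConnected_iff_pathConnectedSpace.2 inferInstance).isConnected.isPreconnected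
  have hIFS : IsShrinkingIFS g (closure U) :=
    { isCompact := hUb.isCompact_closure
      nonempty := hUne.closure
      mapsTo := fun i => (hgU' i).mono_right subset_closure
      continuousOn := hgc
      shrinking := uniformlyShrinking_of_differentiableOn hUo hUb hUc hgc
        (fun i => (hg i).mono (subset_closure.trans hUW)) hgU' }
  exact ⟨codingMap g (closure U), hIFS.continuous_codingMap, hIFS.injective_codingMap hfg hdisj,
    hX ▸ hIFS.range_codingMap hfg, hIFS.map_codingMap hfg⟩

/-- Itinerary coding: inverse branches g_i of f mapping cl U compactly into U
with pairwise disjoint images conjugate f on the maximal invariant set X to the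
full one-sided shift on d symbols. -/
theorem stmt10 (d : ℕ) (hd : 1 ≤ d)
    (U : Set ℂ) (hUne : U.Nonempty) (hUb : Bornology.IsBounded U)
    (hUo : IsOpen U) (hUsc : SimplyConnectedSpace U)
    (W : Set ℂ) (hWo : IsOpen W) (hUW : closure U ⊆ W)
    (g : Fin d → ℂ → ℂ)
    (hg : ∀ i, DifferentiableOn ℂ (g i) W)
    (hgU : ∀ i, g i '' closure U ⊆ U)
    (hdisj : ∀ i j : Fin d, i ≠ j → Disjoint (g i '' closure U) (g j '' closure U))
    (f : ℂ → ℂ) (hfg : ∀ i, ∀ z ∈ closure U, f (g i z) = z)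
    (X : Set ℂ)
    (hX : X = {z : ℂ | ∀ n : ℕ, f^[n] z ∈ ⋃ i : Fin d, g i '' closure U}) :
    ∃ h : (ℕ → Fin d) → ℂ, Continuous h ∧ Function.Injective h ∧
      Set.range h = X ∧ ∀ σ : ℕ → Fin d, f (h σ) = h (σ ∘ Nat.succ) :=
  stmt10_general d U hUne hUb hUo hUsc W hUW g hg hgU hdisj f hfg X hX
end

section
/- Let U ⊆ ℂ be a nonempty, bounded, open, simply connected set, let K ⊆ U be compact, let ι be a type, and let g : ι → (ℂ → ℂ) be a family of functions each of which is holomorphic on U and maps U into K. Then for every sequence j : ℕ → ι, defining Ψ_n = g_{j(0)} ∘ g_{j(1)} ∘ ⋯ ∘ g_{j(n)}, the diameters of the sets Ψ_n(U) tend to 0 as n → ∞. -/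
/-!
The proof runs through the infinitesimal Carathéodory density
`c(z) = sup {|φ'(z)| : φ : U → 𝔻 holomorphic}`, which is bounded below on `U` because `U` is
bounded and bounded above near each point by the Cauchy estimate. Holomorphic self-maps of `U`
do not increase it, and a map `h : U → K` contracts it by a fixed factor `r < 1` (Earle–Hamilton):
the dilation `w ↦ h w + t (h w - h z)` still maps `U` into `U` for small `t > 0`, so
`(1 + t) |h'(z)| c(h z) ≤ c(z)`. Hence `|Ψₙ'| = O(r^{n+1})` locally uniformly on `U`, and, `U`
being connected, chaining these local bounds and covering `K × K` by finitely many of them gives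
`dist (Ψₙ u) (Ψₙ v) = O(r^{n+1})` uniformly for `u, v ∈ K`. Finally `Ψₙ₊₁(U) ⊆ Ψₙ(K)`.
-/

open Filter Topology Set Metric

def DistBoundedOn {ι X Y : Type*} [PseudoMetricSpace Y] (F : ι → X → Y) (a : ι → ℝ)
    (S : Set (X × X)) : Prop :=
  ∃ C ≥ 0, ∀ n, ∀ p ∈ S, dist (F n p.1) (F n p.2) ≤ C * a n

section DistBoundedOn

variable {ι X Y : Type*} [PseudoMetricSpace Y] {F : ι → X → Y} {a : ι → ℝ}
  {S T : Set (X × X)} {V W V' W' s K : Set X} {y : X}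

lemma distBoundedOn_empty : DistBoundedOn F a ∅ :=
  ⟨0, le_rfl, by simp⟩

lemma DistBoundedOn.mono (h : DistBoundedOn F a S) (hTS : T ⊆ S) :
    DistBoundedOn F a T :=
  let ⟨C, hC, hS⟩ := h
  ⟨C, hC, fun n p hp => hS n p (hTS hp)⟩

lemma DistBoundedOn.union (ha : ∀ n, 0 ≤ a n) (hS : DistBoundedOn F a S)
    (hT : DistBoundedOn F a T) : DistBoundedOn F a (S ∪ T) := by
  obtain ⟨C, hC, hS⟩ := hS
  obtain ⟨D, -, hT⟩ := hT
  refine ⟨max C D, le_max_of_le_left hC, fun n p hp => ?_⟩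
  rcases hp with hp | hp
  · exact (hS n p hp).trans (by gcongr; exacts [ha n, le_max_left C D])
  · exact (hT n p hp).trans (by gcongr; exacts [ha n, le_max_right C D])

lemma DistBoundedOn.prod_trans (h₁ : DistBoundedOn F a (V ×ˢ W))
    (h₂ : DistBoundedOn F a (V' ×ˢ W')) (hyW : y ∈ W) (hyV' : y ∈ V') :
    DistBoundedOn F a (V ×ˢ W') := by
  obtain ⟨C₁, hC₁, h₁⟩ := h₁
  obtain ⟨C₂, hC₂, h₂⟩ := h₂
  refine ⟨C₁ + C₂, add_nonneg hC₁ hC₂, fun n p hp => ?_⟩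
  calc dist (F n p.1) (F n p.2) ≤ dist (F n p.1) (F n y) + dist (F n y) (F n p.2) :=
        dist_triangle _ _ _
    _ ≤ C₁ * a n + C₂ * a n :=
        add_le_add (h₁ n (p.1, y) ⟨hp.1, hyW⟩) (h₂ n (y, p.2) ⟨hyV', hp.2⟩)
    _ = (C₁ + C₂) * a n := (add_mul _ _ _).symm

variable [TopologicalSpace X]

lemma IsPreconnected.exists_distBoundedOn_nhds_prod (hs : IsPreconnected s)
    (hloc : ∀ x ∈ s, ∃ V ∈ 𝓝 x, DistBoundedOn F a (V ×ˢ V)) {x y : X} (hx : x ∈ s)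
    (hy : y ∈ s) : ∃ V ∈ 𝓝 x, ∃ W ∈ 𝓝 y, DistBoundedOn F a (V ×ˢ W) := by
  refine hs.induction₂' (fun x y => ∃ V ∈ 𝓝 x, ∃ W ∈ 𝓝 y, DistBoundedOn F a (V ×ˢ W))
    (fun x hx => ?_) (fun x y z _ _ _ => ?_) hx hy
  · obtain ⟨V, hV, hVV⟩ := hloc x hx
    filter_upwards [nhdsWithin_le_nhds (eventually_mem_nhds_iff.2 hV)] with y hVy
    exact ⟨⟨V, hV, V, hVy, hVV⟩, ⟨V, hVy, V, hV, hVV⟩⟩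
  · rintro ⟨V, hV, W, hW, h₁⟩ ⟨V', hV', W', hW', h₂⟩
    exact ⟨V, hV, W', hW', h₁.prod_trans h₂ (mem_of_mem_nhds hW) (mem_of_mem_nhds hV')⟩

lemma IsCompact.distBoundedOn_prod (hK : IsCompact K) (hs : IsPreconnected s) (hKs : K ⊆ s)
    (ha : ∀ n, 0 ≤ a n) (hloc : ∀ x ∈ s, ∃ V ∈ 𝓝 x, DistBoundedOn F a (V ×ˢ V)) :
    DistBoundedOn F a (K ×ˢ K) := by
  refine (hK.prod hK).induction_on distBoundedOn_empty (fun _ _ hST h => h.mono hST)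
    (fun _ _ => DistBoundedOn.union ha) fun p hp => ?_
  obtain ⟨V, hV, W, hW, h⟩ := hs.exists_distBoundedOn_nhds_prod hloc (hKs hp.1) (hKs hp.2)
  exact ⟨V ×ˢ W, mem_nhdsWithin_of_mem_nhds (prod_mem_nhds hV hW), h⟩

end DistBoundedOn

def diskMaps (U : Set ℂ) : Set (ℂ → ℂ) :=
  {φ | DifferentiableOn ℂ φ U ∧ MapsTo φ U (ball 0 1)}

noncomputable def caraDensity (U : Set ℂ) (z : ℂ) : ℝ :=
  sSup ((fun φ => ‖deriv φ z‖) '' diskMaps U)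

section CaraDensity

variable {U : Set ℂ} {R r : ℝ} {z : ℂ}

lemma caraDensity_nonneg (U : Set ℂ) (z : ℂ) : 0 ≤ caraDensity U z :=
  Real.sSup_nonneg <| forall_mem_image.2 fun _ _ => norm_nonneg _

lemma norm_deriv_le_two_div {φ : ℂ → ℂ} (hφ : φ ∈ diskMaps U) (hr : 0 < r)
    (hball : ball z r ⊆ U) : ‖deriv φ z‖ ≤ 2 / r := by
  refine Complex.norm_deriv_le_div_of_mapsTo_ball (hφ.1.mono hball) (fun w hw => ?_) hr
  have hφw := mem_ball_zero_iff.1 (hφ.2 (hball hw))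
  have hφz := mem_ball_zero_iff.1 (hφ.2 (hball (mem_ball_self hr)))
  rw [mem_closedBall, dist_eq_norm]
  linarith [norm_sub_le (φ w) (φ z)]

lemma caraDensity_le_two_div (hr : 0 < r) (hball : ball z r ⊆ U) :
    caraDensity U z ≤ 2 / r :=
  Real.sSup_le (forall_mem_image.2 fun _ hφ => norm_deriv_le_two_div hφ hr hball) (by positivity)

lemma norm_deriv_le_caraDensity (hU : IsOpen U) (hz : z ∈ U) {φ : ℂ → ℂ}
    (hφ : φ ∈ diskMaps U) : ‖deriv φ z‖ ≤ caraDensity U z := by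
  obtain ⟨r, hr, hball⟩ := Metric.isOpen_iff.1 hU z hz
  exact le_csSup ⟨2 / r, forall_mem_image.2 fun _ hψ => norm_deriv_le_two_div hψ hr hball⟩
    (mem_image_of_mem _ hφ)

lemma inv_le_caraDensity (hU : IsOpen U) (hUR : U ⊆ ball 0 R) (hz : z ∈ U) :
    R⁻¹ ≤ caraDensity U z := by
  have hR : 0 < R := (norm_nonneg z).trans_lt (mem_ball_zero_iff.1 (hUR hz))
  have hscale : (fun w => (R : ℂ)⁻¹ * w) ∈ diskMaps U := by
    refine ⟨(differentiable_id.const_mul _).differentiableOn, fun w hw => ?_⟩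
    have hw := mem_ball_zero_iff.1 (hUR hw)
    rw [mem_ball_zero_iff, norm_mul, norm_inv, Complex.norm_of_nonneg hR.le]
    exact (inv_mul_lt_one₀ hR).2 hw
  simpa [deriv_const_mul_field', abs_of_pos hR] using norm_deriv_le_caraDensity hU hz hscale

lemma norm_deriv_mul_caraDensity_le (hU : IsOpen U) {h : ℂ → ℂ} (hh : DifferentiableOn ℂ h U)
    (hhU : MapsTo h U U) (hz : z ∈ U) :
    ‖deriv h z‖ * caraDensity U (h z) ≤ caraDensity U z := by
  rw [caraDensity, ← smul_eq_mul, ← Real.sSup_smul_of_nonneg (norm_nonneg _)]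
  refine Real.sSup_le ?_ (caraDensity_nonneg U z)
  rintro _ ⟨_, ⟨φ, hφ, rfl⟩, rfl⟩
  have hφh : φ ∘ h ∈ diskMaps U := ⟨hφ.1.comp hh hhU, hφ.2.comp hhU⟩
  calc ‖deriv h z‖ • ‖deriv φ (h z)‖ = ‖deriv (φ ∘ h) z‖ := by
        rw [deriv_comp z (hφ.1.differentiableAt (hU.mem_nhds (hhU hz)))
          (hh.differentiableAt (hU.mem_nhds hz)), norm_mul, smul_eq_mul, mul_comm]
    _ ≤ caraDensity U z := norm_deriv_le_caraDensity hU hz hφh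

def CaraContraction (U : Set ℂ) (a : ℝ) (f : ℂ → ℂ) : Prop :=
  DifferentiableOn ℂ f U ∧ MapsTo f U U ∧
    ∀ z ∈ U, ‖deriv f z‖ * caraDensity U (f z) ≤ a * caraDensity U z

lemma CaraContraction.comp {a b : ℝ} {f g : ℂ → ℂ} (hf : CaraContraction U a f)
    (hg : CaraContraction U b g) (ha : 0 ≤ a) (hU : IsOpen U) :
    CaraContraction U (a * b) (f ∘ g) := by
  refine ⟨hf.1.comp hg.1 hg.2.1, hf.2.1.comp hg.2.1, fun z hz => ?_⟩
  have hgz := hg.2.1 hz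
  rw [deriv_comp z (hf.1.differentiableAt (hU.mem_nhds hgz))
    (hg.1.differentiableAt (hU.mem_nhds hz)), norm_mul, Function.comp_apply]
  calc ‖deriv f (g z)‖ * ‖deriv g z‖ * caraDensity U (f (g z))
      = ‖deriv g z‖ * (‖deriv f (g z)‖ * caraDensity U (f (g z))) := by ring
    _ ≤ ‖deriv g z‖ * (a * caraDensity U (g z)) :=
        mul_le_mul_of_nonneg_left (hf.2.2 _ hgz) (norm_nonneg _)
    _ = a * (‖deriv g z‖ * caraDensity U (g z)) := by ring
    _ ≤ a * (b * caraDensity U z) := mul_le_mul_of_nonneg_left (hg.2.2 z hz) ha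
    _ = a * b * caraDensity U z := by ring

/-- Earle–Hamilton: compare `h` with its dilation `w ↦ h w + t (h w - h z)` about `h z`, which
still maps `U` into `U` when `t = δ / (2R)` and has derivative `(1 + t) h'(z)` at `z`. -/
lemma caraContraction_of_mapsTo_thickening (hU : IsOpen U) (hUR : U ⊆ ball 0 R) {K : Set ℂ}
    {δ : ℝ} (hδ : 0 < δ) (hKU : thickening δ K ⊆ U) {h : ℂ → ℂ} (hh : DifferentiableOn ℂ h U)
    (hhK : MapsTo h U K) : CaraContraction U (1 + δ / (2 * R))⁻¹ h := by
  have hhU : MapsTo h U U := hhK.mono_right ((self_subset_thickening hδ K).trans hKU)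
  refine ⟨hh, hhU, fun z hz => ?_⟩
  have hR : 0 < R := (norm_nonneg z).trans_lt (mem_ball_zero_iff.1 (hUR hz))
  set t := δ / (2 * R) with ht
  have ht0 : 0 < t := by positivity
  set G : ℂ → ℂ := fun w => h w + (t : ℂ) * (h w - h z)
  have hGU : MapsTo G U U := by
    intro w hw
    refine hKU (mem_thickening_iff.2 ⟨h w, hhK hw, ?_⟩)
    have hhw := mem_ball_zero_iff.1 (hUR (hhU hw))
    have hhz := mem_ball_zero_iff.1 (hUR (hhU hz))
    calc dist (G w) (h w) = ‖(t : ℂ) * (h w - h z)‖ := by simp [G, dist_eq_norm]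
      _ = t * ‖h w - h z‖ := by rw [norm_mul, Complex.norm_of_nonneg ht0.le]
      _ < t * (2 * R) := by gcongr; linarith [norm_sub_le (h w) (h z)]
      _ = δ := by rw [ht]; field_simp
  have hG'z : HasDerivAt G (((1 + t : ℝ) : ℂ) * deriv h z) z := by
    have hh' := (hh.differentiableAt (hU.mem_nhds hz)).hasDerivAt
    exact (hh'.add ((hh'.sub_const (h z)).const_mul (t : ℂ))).congr_deriv (by push_cast; ring)
  have hGd : DifferentiableOn ℂ G U := hh.add ((hh.sub_const _).const_mul _)
  have key := norm_deriv_mul_caraDensity_le hU hGd hGU hz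
  rw [hG'z.deriv, show G z = h z by simp [G], norm_mul, Complex.norm_of_nonneg (by positivity),
    mul_assoc] at key
  exact (le_inv_mul_iff₀ (by positivity)).2 key

lemma CaraContraction.norm_deriv_le {a : ℝ} {f : ℂ → ℂ} (hf : CaraContraction U a f)
    (hU : IsOpen U) (hUR : U ⊆ ball 0 R) (hr : 0 < r) (hball : ball z r ⊆ U) (ha : 0 ≤ a) :
    ‖deriv f z‖ ≤ a * (2 * R / r) := by
  have hz : z ∈ U := hball (mem_ball_self hr)
  have hR : 0 < R := (norm_nonneg z).trans_lt (mem_ball_zero_iff.1 (hUR hz))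
  have h : ‖deriv f z‖ * R⁻¹ ≤ a * (2 / r) := calc
    ‖deriv f z‖ * R⁻¹ ≤ ‖deriv f z‖ * caraDensity U (f z) :=
        mul_le_mul_of_nonneg_left (inv_le_caraDensity hU hUR (hf.2.1 hz)) (norm_nonneg _)
    _ ≤ a * caraDensity U z := hf.2.2 z hz
    _ ≤ a * (2 / r) := mul_le_mul_of_nonneg_left (caraDensity_le_two_div hr hball) ha
  rw [← div_eq_mul_inv, div_le_iff₀ hR] at h
  calc ‖deriv f z‖ ≤ a * (2 / r) * R := h
    _ = a * (2 * R / r) := by ring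

lemma CaraContraction.dist_le {a ε : ℝ} {f : ℂ → ℂ} (hf : CaraContraction U a f)
    (hU : IsOpen U) (hUR : U ⊆ ball 0 R) (hε : 0 < ε) {x u v : ℂ}
    (hball : ball x (2 * ε) ⊆ U) (hu : u ∈ ball x ε) (hv : v ∈ ball x ε) (ha : 0 ≤ a) :
    dist (f u) (f v) ≤ 4 * R * a := by
  have hbound : ∀ w ∈ ball x ε, ‖deriv f w‖ ≤ a * (2 * R / ε) := fun w hw =>
    hf.norm_deriv_le hU hUR hε ((ball_subset_ball' (by linarith [mem_ball.1 hw])).trans hball) ha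
  have hdiff : ∀ w ∈ ball x ε, DifferentiableAt ℂ f w := fun w hw =>
    hf.1.differentiableAt (hU.mem_nhds (hball (ball_subset_ball (by linarith) hw)))
  have hR : 0 < R := by
    have := mem_ball_zero_iff.1 (hUR (hball (mem_ball_self (by linarith))))
    exact (norm_nonneg x).trans_lt this
  have huv : ‖u - v‖ ≤ 2 * ε := by
    rw [← dist_eq_norm]; linarith [dist_triangle_right u v x, mem_ball.1 hu, mem_ball.1 hv]
  calc dist (f u) (f v) = ‖f u - f v‖ := dist_eq_norm _ _
    _ ≤ a * (2 * R / ε) * ‖u - v‖ :=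
        (convex_ball x ε).norm_image_sub_le_of_norm_deriv_le hdiff hbound hv hu
    _ ≤ a * (2 * R / ε) * (2 * ε) := by gcongr
    _ = 4 * R * a := by field_simp; ring

lemma caraContraction_comp_chain (hU : IsOpen U) {a : ℝ} (ha : 0 ≤ a) {ι : Type*}
    {g : ι → ℂ → ℂ} (hg : ∀ i, CaraContraction U a (g i)) (j : ℕ → ι) {Ψ : ℕ → ℂ → ℂ}
    (hΨ0 : Ψ 0 = g (j 0)) (hΨ : ∀ n : ℕ, Ψ (n + 1) = Ψ n ∘ g (j (n + 1))) (n : ℕ) :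
    CaraContraction U (a ^ (n + 1)) (Ψ n) := by
  induction n with
  | zero => simpa [hΨ0] using hg (j 0)
  | succ n ih => rw [hΨ, pow_succ]; exact ih.comp (hg _) (by positivity) hU

end CaraDensity

theorem stmt11_general (U : Set ℂ) (hUb : Bornology.IsBounded U)
    (hUo : IsOpen U) (hUsc : SimplyConnectedSpace U)
    (K : Set ℂ) (hK : IsCompact K) (hKU : K ⊆ U)
    (ι : Type*) (g : ι → ℂ → ℂ)
    (hg : ∀ i, DifferentiableOn ℂ (g i) U) (hgK : ∀ i, g i '' U ⊆ K)
    (j : ℕ → ι) (Ψ : ℕ → ℂ → ℂ)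
    (hΨ0 : Ψ 0 = g (j 0)) (hΨ : ∀ n : ℕ, Ψ (n + 1) = Ψ n ∘ g (j (n + 1))) :
    Tendsto (fun n => Metric.diam (Ψ n '' U)) atTop (𝓝 0) := by
  obtain ⟨R, hR, hUR⟩ := hUb.subset_ball_lt 0 0
  obtain ⟨δ, hδ, hthick⟩ := hK.exists_thickening_subset_open hUo hKU
  set r := (1 + δ / (2 * R))⁻¹
  have hr0 : 0 ≤ r := by positivity
  have hr1 : r < 1 := inv_lt_one_of_one_lt₀ (by simp only [lt_add_iff_pos_right]; positivity)
  have hgK' : ∀ i, MapsTo (g i) U K := fun i => mapsTo_iff_image_subset.2 (hgK i)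
  have hΨc : ∀ n, CaraContraction U (r ^ (n + 1)) (Ψ n) :=
    caraContraction_comp_chain hUo hr0
      (fun i => caraContraction_of_mapsTo_thickening hUo hUR hδ hthick (hg i) (hgK' i)) j hΨ0 hΨ
  have hUconn : IsPreconnected U :=
    (isPathConnected_iff_pathConnectedSpace.2 inferInstance).isConnected.isPreconnected
  obtain ⟨C, hC0, hC⟩ : DistBoundedOn Ψ (fun n => r ^ (n + 1)) (K ×ˢ K) := by
    refine hK.distBoundedOn_prod hUconn hKU (fun n => by positivity) fun x hx => ?_
    obtain ⟨ε, hε, hball⟩ := Metric.isOpen_iff.1 hUo x hx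
    refine ⟨ball x (ε / 2), ball_mem_nhds x (by positivity), 4 * R, by positivity,
      fun n p hp => (hΨc n).dist_le hUo hUR (by positivity) ?_ hp.1 hp.2 (by positivity)⟩
    rwa [mul_div_cancel₀ _ two_ne_zero]
  have hdiam : ∀ n, diam (Ψ (n + 1) '' U) ≤ C * r ^ (n + 1) := fun n => by
    refine diam_le_of_forall_dist_le (by positivity) ?_
    rintro _ ⟨x, hx, rfl⟩ _ ⟨y, hy, rfl⟩
    rw [hΨ]
    exact hC n (g _ x, g _ y) ⟨hgK' _ hx, hgK' _ hy⟩
  refine (tendsto_add_atTop_iff_nat 1).1 (squeeze_zero (fun _ => diam_nonneg) hdiam ?_)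
  simpa using ((tendsto_pow_atTop_nhds_zero_of_lt_one hr0 hr1).comp
    (tendsto_add_atTop_nat 1)).const_mul C

/-- Uniform contraction of compositions of inverse branches: if each g_i is
holomorphic on U and maps U into a compact subset K of U, then the diameters of
the images of U under the compositions Ψ_n = g_{j 0} ∘ ⋯ ∘ g_{j n} tend to 0. -/
theorem stmt11 (U : Set ℂ) (hUne : U.Nonempty) (hUb : Bornology.IsBounded U)
    (hUo : IsOpen U) (hUsc : SimplyConnectedSpace U)
    (K : Set ℂ) (hK : IsCompact K) (hKU : K ⊆ U)
    (ι : Type*) (g : ι → ℂ → ℂ)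
    (hg : ∀ i, DifferentiableOn ℂ (g i) U) (hgK : ∀ i, g i '' U ⊆ K)
    (j : ℕ → ι) (Ψ : ℕ → ℂ → ℂ)
    (hΨ0 : Ψ 0 = g (j 0)) (hΨ : ∀ n : ℕ, Ψ (n + 1) = Ψ n ∘ g (j (n + 1))) :
    Tendsto (fun n => Metric.diam (Ψ n '' U)) atTop (𝓝 0) :=
  stmt11_general U hUb hUo hUsc K hK hKU ι g hg hgK j Ψ hΨ0 hΨ
end

section
/- Let d ≥ 2 be a natural number, let z_1, …, z_d ∈ ℂ be pairwise distinct, and let g be the polynomial ∏_{i=1}^d (X − z_i). Let P and Q be polynomials over ℂ with deg P ≤ d, deg Q ≤ d − 1, and P ≠ X·Q. Suppose that for every i: Q(z_i) ≠ 0, P(z_i) = z_i·Q(z_i), and (P′·Q − P·Q′)(z_i) = 0. Then there exists ρ ∈ ℂ, ρ ≠ 0, such that Q = ρ·g′ and P = ρ·(X·g′ − g); that is, the rational function P/Q equals the Newton's method map N_g(z) = z − g(z)/g′(z) of the polynomial g. -/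
/-!
Both `X * Q - P` and `Q - ρ • g'` vanish at the `d` distinct roots of `g`. The first has degree
at most `d`, so it is a constant multiple `ρ • g`; substituting `P = X * Q - ρ • g` turns the
criticality condition at a root `a` of `g` into `Q(a) * (Q(a) - ρ g'(a)) = 0`. Since `Q(a) ≠ 0`,
the second polynomial, of degree `< d`, vanishes at all roots of `g` and is therefore zero.
-/

open Polynomial

section DistinctRoots

variable {K : Type*} [Field K] {ι : Type*} [Fintype ι] {x : ι → K}

theorem prod_X_sub_C_dvd_of_eval_eq_zero (hx : Function.Injective x) {r : K[X]}
    (hr : ∀ i, r.eval (x i) = 0) : ∏ i, (X - C (x i)) ∣ r :=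
  Finset.prod_dvd_of_coprime
    (fun _ _ _ _ hij => isCoprime_X_sub_C_of_isUnit_sub (sub_ne_zero.2 (hx.ne hij)).isUnit)
    fun i _ => dvd_iff_isRoot.2 (hr i)

theorem eq_C_mul_prod_X_sub_C_of_eval_eq_zero (hx : Function.Injective x) {r : K[X]}
    (hr : ∀ i, r.eval (x i) = 0) (hdeg : r.natDegree ≤ Fintype.card ι) :
    r = C r.leadingCoeff * ∏ i, (X - C (x i)) :=
  eq_leadingCoeff_mul_of_monic_of_dvd_of_natDegree_le (monic_prod_X_sub_C x _)
    (prod_X_sub_C_dvd_of_eval_eq_zero hx hr) (by simpa using hdeg)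

end DistinctRoots

theorem eval_derivative_mul_sub_mul_derivative_X_mul_sub_C_mul {R : Type*} [CommRing R]
    (Q g : R[X]) (c a : R) (hg : g.eval a = 0) :
    ((X * Q - C c * g).derivative * Q - (X * Q - C c * g) * Q.derivative).eval a =
      Q.eval a * (Q - C c * g.derivative).eval a := by
  simp only [derivative_sub, derivative_mul, derivative_X, derivative_C, eval_sub, eval_mul,
    eval_add, eval_X, eval_C, eval_one, hg]
  ring

/-- A rational map of degree ≤ d with d superattracting fixed points is the
Newton's method map of the degree-d polynomial vanishing at those points. -/
theorem stmt15 (d : ℕ) (hd : 2 ≤ d) (z : Fin d → ℂ) (hz : Function.Injective z)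
    (g : Polynomial ℂ) (hg : g = ∏ i : Fin d, (X - C (z i)))
    (P Q : Polynomial ℂ) (hPdeg : P.degree ≤ (d : ℕ))
    (hQdeg : Q.degree ≤ ((d - 1 : ℕ) : ℕ)) (hPQ : P ≠ X * Q)
    (hQz : ∀ i, Q.eval (z i) ≠ 0)
    (hfix : ∀ i, P.eval (z i) = z i * Q.eval (z i))
    (hcrit : ∀ i, (P.derivative * Q - P * Q.derivative).eval (z i) = 0) :
    ∃ ρ : ℂ, ρ ≠ 0 ∧ Q = C ρ * g.derivative ∧
      P = C ρ * (X * g.derivative - g) := by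
  have hgd : g.natDegree = d := by simp [hg]
  have hgz : ∀ i, g.eval (z i) = 0 := fun i => by
    simp [hg, eval_prod, Finset.prod_eq_zero_iff, sub_eq_zero]
  have hQd : Q.natDegree ≤ d - 1 := natDegree_le_of_degree_le hQdeg
  have hXQd : (X * Q).natDegree ≤ d :=
    (natDegree_mul_le_of_le natDegree_X_le hQd).trans (by omega)
  obtain ⟨ρ, hρ⟩ : ∃ ρ, X * Q - P = C ρ * g :=
    ⟨_, hg ▸ eq_C_mul_prod_X_sub_C_of_eval_eq_zero hz (fun i => by simp [hfix])
      (by simpa using natDegree_sub_le_of_le hXQd (natDegree_le_of_degree_le hPdeg))⟩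
  have hρ0 : ρ ≠ 0 := by
    rintro rfl
    exact hPQ (sub_eq_zero.1 (by simpa using hρ)).symm
  have hP : P = X * Q - C ρ * g := by rw [← hρ]; ring
  have hQ : Q = C ρ * g.derivative := by
    refine eq_of_natDegree_lt_card_of_eval_eq _ _ hz (fun i => ?_) ?_
    · have h := hcrit i
      rw [hP, eval_derivative_mul_sub_mul_derivative_X_mul_sub_C_mul _ _ _ _ (hgz i)] at h
      simpa [sub_eq_zero] using (mul_eq_zero.1 h).resolve_left (hQz i)
    · have hg' : (C ρ * g.derivative).natDegree ≤ d - 1 :=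
        (natDegree_C_mul_le _ _).trans (hgd ▸ natDegree_derivative_le g)
      simp only [Fintype.card_fin]
      omega
  exact ⟨ρ, hρ0, hQ, by rw [hP, hQ]; ring⟩
end

section
/- Let N ≥ 1 be a natural number, let a : Fin N → ℂ be pairwise distinct (injective), and let m ∈ Fin N with a_m ≠ 0. Then there exist δ > 0 and a function η : ℂ → ℂ analytic on the open ball of radius δ centered at 0, such that η(0) = a_m, such that for every s in that ball with s ≠ 0 one has η(s) ≠ a_j for all j and 2·η(s) = s²·Σ_{j} 1/(η(s) − a_j)², and such that the derivative η′(0) satisfies 2·a_m·(η′(0))² = 1. -/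
/-- Analytic branch of critical points of F₁(z) = z² + c + b Σ 1/(z − a_j) near
the pole a_m, in the variable s = √b: the branch η satisfies
2η(s) = s² Σ_j 1/(η(s) − a_j)² and η′(0)² = 1/(2 a_m). -/
theorem stmt16 (N : ℕ) (hN : 1 ≤ N) (a : Fin N → ℂ) (ha : Function.Injective a)
    (m : Fin N) (ham : a m ≠ 0) :
    ∃ δ > (0 : ℝ), ∃ η : ℂ → ℂ,
      AnalyticOn ℂ η (Metric.ball (0 : ℂ) δ) ∧ η 0 = a m ∧
      (∀ s ∈ Metric.ball (0 : ℂ) δ, s ≠ 0 →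
        (∀ j : Fin N, η s ≠ a j) ∧
        2 * η s = s ^ 2 * ∑ j : Fin N, 1 / (η s - a j) ^ 2) ∧
      2 * a m * (deriv η 0) ^ 2 = 1 := by
  classical
  have h2am : (2 : ℂ) * a m ≠ 0 := mul_ne_zero two_ne_zero ham
  -- auxiliary functions
  set S : ℂ → ℂ := fun z => ∑ j ∈ Finset.univ.erase m, 1 / (z - a j) ^ 2 with hS
  set D : ℂ → ℂ := fun z => 1 + (z - a m) ^ 2 * S z with hD
  set u : ℂ → ℂ := fun z => z / (a m * D z) with hu
  set w₀ : ℂ := Complex.exp ((1 / 2) * Complex.log (2 * a m)) with hw₀def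
  set g : ℂ → ℂ := fun z => w₀ * Complex.exp ((1 / 2) * Complex.log (u z)) with hg
  set σ : ℂ → ℂ := fun z => (z - a m) * g z with hσ
  have hw₀sq : w₀ ^ 2 = 2 * a m := by
    rw [hw₀def, sq, ← Complex.exp_add]
    have : (1 / 2) * Complex.log (2 * a m) + (1 / 2) * Complex.log (2 * a m)
        = Complex.log (2 * a m) := by ring
    rw [this, Complex.exp_log h2am]
  have hw₀ne : w₀ ≠ 0 := Complex.exp_ne_zero _
  -- analyticity at a m
  have hSa : AnalyticAt ℂ S (a m) := by
    rw [hS]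
    refine Finset.analyticAt_fun_sum _ (fun j hj => ?_)
    have hj' : a m ≠ a j := fun h => (Finset.ne_of_mem_erase hj) (ha h.symm)
    exact (analyticAt_const.div ((analyticAt_id.sub analyticAt_const).pow 2)
      (pow_ne_zero 2 (sub_ne_zero.2 hj')))
  have hDa : AnalyticAt ℂ D (a m) := by
    rw [hD]
    exact analyticAt_const.add (((analyticAt_id.sub analyticAt_const).pow 2).mul hSa)
  have hD1 : D (a m) = 1 := by simp [hD]
  have hua : AnalyticAt ℂ u (a m) := by
    rw [hu]
    exact analyticAt_id.div (analyticAt_const.mul hDa)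
      (by rw [hD1, mul_one]; exact ham)
  have hu1 : u (a m) = 1 := by
    rw [hu]; simp [hD1, ham]
  have hga : AnalyticAt ℂ g (a m) := by
    rw [hg]
    exact analyticAt_const.mul
      ((analyticAt_const.mul (hua.clog (by rw [hu1]; exact Complex.one_mem_slitPlane))).cexp)
  have hgam : g (a m) = w₀ := by
    rw [hg]; simp [hu1]
  have hσa : AnalyticAt ℂ σ (a m) := by
    rw [hσ]
    exact (analyticAt_id.sub analyticAt_const).mul hga
  have hσam : σ (a m) = 0 := by simp [hσ]
  -- strict derivative of σ at a m
  have hder : HasDerivAt σ w₀ (a m) := by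
    have hgd := hga.differentiableAt.hasDerivAt
    have h := ((hasDerivAt_id (a m)).sub_const (a m)).mul hgd
    simp only [id, sub_self, zero_mul, one_mul, add_zero, mul_zero] at h
    rw [hσ, ← hgam]
    exact h
  have hst : HasStrictDerivAt σ w₀ (a m) := by
    obtain ⟨p, hp⟩ := hσa
    have h1 := hp.hasStrictDerivAt
    have h2 : deriv σ (a m) = w₀ := hder.deriv
    rwa [← hp.deriv, h2] at h1
  -- the local inverse
  have e := hst.hasStrictFDerivAt_equiv hw₀ne
  set F := e.toOpenPartialHomeomorph σ with hF
  have haF : a m ∈ F.source := e.mem_toOpenPartialHomeomorph_source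
  have hFcoe : ⇑F = σ := e.toOpenPartialHomeomorph_coe
  have hF0 : F (a m) = 0 := by rw [hFcoe]; exact hσam
  have h0t : (0 : ℂ) ∈ F.target := hF0 ▸ F.map_source haF
  have hsymm0 : F.symm 0 = a m := by rw [← hF0]; exact F.left_inv haF
  have hηan : AnalyticAt ℂ (⇑F.symm) 0 := by
    refine F.analyticAt_symm
      (i := (ContinuousLinearEquiv.unitsEquivAut ℂ) (Units.mk0 w₀ hw₀ne)) h0t ?_ ?_
    · rw [hsymm0, hFcoe]; exact hσa
    · rw [hsymm0, hFcoe]; exact e.hasFDerivAt.fderiv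
  have hηd : HasStrictDerivAt (⇑F.symm) w₀⁻¹ 0 := by
    have hg' : ∀ᶠ x in nhds (a m), F.symm (σ x) = x := by
      filter_upwards [F.open_source.eventually_mem haF] with x hx
      rw [← hFcoe]; exact F.left_inv hx
    have h := hst.to_local_left_inverse hw₀ne hg'
    rwa [hσam] at h
  -- the algebraic identity
  have key : ∀ z : ℂ, z ≠ a m → (∀ j, j ≠ m → z ≠ a j) → D z ≠ 0 → z ≠ 0 →
      (∀ j, z ≠ a j) ∧ σ z ^ 2 * ∑ j : Fin N, 1 / (z - a j) ^ 2 = 2 * z := by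
    intro z hzm hzj hDz hz0
    have hall : ∀ j, z ≠ a j := fun j => by
      by_cases h : j = m
      · subst h; exact hzm
      · exact hzj j h
    refine ⟨hall, ?_⟩
    have hzm' : z - a m ≠ 0 := sub_ne_zero.2 hzm
    have huz : u z ≠ 0 := by
      rw [hu]; exact div_ne_zero hz0 (mul_ne_zero ham hDz)
    have hgz : g z ^ 2 = 2 * z / D z := by
      have h1 : Complex.exp ((1 / 2) * Complex.log (u z)) ^ 2 = u z := by
        rw [sq, ← Complex.exp_add]
        have : (1 / 2) * Complex.log (u z) + (1 / 2) * Complex.log (u z)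
            = Complex.log (u z) := by ring
        rw [this, Complex.exp_log huz]
      have h2 : g z ^ 2 = w₀ ^ 2 * u z := by
        rw [hg, mul_pow, h1]
      rw [h2, hw₀sq, hu]
      field_simp
    have hsum : (∑ j : Fin N, 1 / (z - a j) ^ 2) = D z / (z - a m) ^ 2 := by
      have hsplit : (∑ j : Fin N, (1 : ℂ) / (z - a j) ^ 2)
          = 1 / (z - a m) ^ 2 + S z := by
        rw [hS]
        exact (Finset.add_sum_erase _ _ (Finset.mem_univ m)).symm
      rw [hsplit, hD]
      field_simp
    rw [hσ, hsum, mul_pow, hgz]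
    field_simp
  -- eventual conditions near a m
  have hEj : ∀ᶠ z in nhds (a m), ∀ j, j ≠ m → z ≠ a j := by
    rw [Filter.eventually_all]
    intro j
    by_cases h : j = m
    · filter_upwards with z hz; exact absurd h hz
    · have : a m ≠ a j := fun hh => h (ha hh.symm)
      filter_upwards [eventually_ne_nhds this] with z hz _; exact hz
  have hED : ∀ᶠ z in nhds (a m), D z ≠ 0 :=
    hDa.continuousAt.eventually_ne (by rw [hD1]; exact one_ne_zero)
  have hE0 : ∀ᶠ z in nhds (a m), z ≠ (0 : ℂ) := eventually_ne_nhds ham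
  have hGmem : ∀ᶠ z in nhds (a m),
      (∀ j, j ≠ m → z ≠ a j) ∧ D z ≠ 0 ∧ z ≠ 0 := hEj.and (hED.and hE0)
  -- eventual conditions near 0
  have hEv : ∀ᶠ s in nhds (0 : ℂ), AnalyticAt ℂ (⇑F.symm) s ∧ s ∈ F.target ∧
      ((∀ j, j ≠ m → F.symm s ≠ a j) ∧ D (F.symm s) ≠ 0 ∧ F.symm s ≠ 0) := by
    refine hηan.eventually_analyticAt.and ((F.open_target.eventually_mem h0t).and ?_)
    have hc : ContinuousAt (⇑F.symm) 0 := hηan.continuousAt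
    have : nhds (a m) = nhds (F.symm 0) := by rw [hsymm0]
    rw [this] at hGmem
    exact hc.eventually hGmem
  obtain ⟨δ, hδpos, hδ⟩ := Metric.eventually_nhds_iff.1 hEv
  refine ⟨δ, hδpos, ⇑F.symm, ?_, hsymm0, ?_, ?_⟩
  · intro s hs
    rw [Metric.mem_ball] at hs
    exact ((hδ hs).1).analyticWithinAt
  · intro s hs hs0
    rw [Metric.mem_ball] at hs
    obtain ⟨-, hsT, hG1, hG2, hG3⟩ := hδ hs
    have hσηs : σ (F.symm s) = s := by
      rw [← hFcoe]; exact F.right_inv hsT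
    have hzm : F.symm s ≠ a m := by
      intro h
      apply hs0
      rw [← hσηs, h, hσam]
    obtain ⟨hall, heq⟩ := key (F.symm s) hzm hG1 hG2 hG3
    rw [hσηs] at heq
    exact ⟨hall, heq.symm⟩
  · rw [hηd.hasDerivAt.deriv, inv_pow, hw₀sq]
    exact mul_inv_cancel₀ h2am
end
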